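/- arXiv:1107.1675 — 3 statements merged into one kernel-verified Lean document; each statement's English description precedes it below -/
import Mathlib

section
/- (Parallel rescalability is conformally invariant) If K spans a parallel ray for g (∇_a K^b = f_a K^b) and K cannot be rescaled to a g-parallel vector field (i.e. ∇_{[a}f_{b]} ≠ 0), then for every conformally rescaled metric ĝ = e^{2Υ}g there is no nowhere-zero function φ such that φK is ĝ-parallel. -/
/- A coordinate-chart framework for pseudo-Riemannian geometry on ℝⁿ:
metric, Christoffel symbols, covariant derivatives, curvature, Ricci,
Schouten, Weyl, Cotton and Bach tensors, and the standard tractor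
connection, all written in index notation. -/

noncomputable section

open scoped BigOperators

/-- Points of the chart ℝⁿ. -/
abbrev Pt (n : ℕ) := Fin n → ℝ

/-- Partial derivative of a scalar function in the coordinate direction `a`. -/
def pd {n : ℕ} (a : Fin n) (f : Pt n → ℝ) (x : Pt n) : ℝ :=
  fderiv ℝ f x (Pi.single a 1)

/-- A smooth vector field. -/
def SmoothVF {n : ℕ} (K : Pt n → Pt n) : Prop := ∀ b, ContDiff ℝ (⊤ : ℕ∞) (fun x => K x b)

/-- A smooth one-form. -/
def SmoothForm {n : ℕ} (f : Pt n → Fin n → ℝ) : Prop := ∀ b, ContDiff ℝ (⊤ : ℕ∞) (fun x => f x b)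

/-- A pseudo-Riemannian metric (of arbitrary signature) in a global
coordinate chart on ℝⁿ, given by its components `g x a b`, together with the
components `ginv` of its pointwise inverse. -/
structure MetricG (n : ℕ) where
  g : Pt n → Fin n → Fin n → ℝ
  ginv : Pt n → Fin n → Fin n → ℝ
  symm : ∀ x a b, g x a b = g x b a
  smooth : ∀ a b, ContDiff ℝ (⊤ : ℕ∞) (fun x => g x a b)
  inv_mul : ∀ x a c, (∑ b, ginv x a b * g x b c) = if a = c then (1:ℝ) else 0

namespace MetricG

variable {n : ℕ} (G : MetricG n)

/-- The inner product of two tangent vectors at `x`. -/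
def ip (x : Pt n) (X Y : Pt n) : ℝ := ∑ a, ∑ b, G.g x a b * X a * Y b

/-- Christoffel symbols Γ^c_{ab} of the Levi-Civita connection. -/
def Γ (c a b : Fin n) (x : Pt n) : ℝ :=
  (1/2) * ∑ d, G.ginv x c d *
    (pd a (fun y => G.g y d b) x + pd b (fun y => G.g y d a) x - pd d (fun y => G.g y a b) x)

/-- Covariant derivative (∇_a X)^b of a vector field. -/
def covVec (X : Pt n → Pt n) (a b : Fin n) (x : Pt n) : ℝ :=
  pd a (fun y => X y b) x + ∑ c, G.Γ b a c x * X x c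

/-- Covariant derivative ∇_a ω_b of a one-form. -/
def cov1 (ω : Pt n → Fin n → ℝ) (a b : Fin n) (x : Pt n) : ℝ :=
  pd a (fun y => ω y b) x - ∑ e, G.Γ e a b x * ω x e

/-- Covariant derivative ∇_a T_{bc} of a (0,2)-tensor field. -/
def cov2 (T : Pt n → Fin n → Fin n → ℝ) (a b c : Fin n) (x : Pt n) : ℝ :=
  pd a (fun y => T y b c) x - ∑ e, G.Γ e a b x * T x e c - ∑ e, G.Γ e a c x * T x b e

/-- Covariant derivative ∇_a T_{bcd} of a (0,3)-tensor field. -/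
def cov3 (T : Pt n → Fin n → Fin n → Fin n → ℝ) (a b c d : Fin n) (x : Pt n) : ℝ :=
  pd a (fun y => T y b c d) x - ∑ e, G.Γ e a b x * T x e c d
    - ∑ e, G.Γ e a c x * T x b e d - ∑ e, G.Γ e a d x * T x b c e

/-- Curvature tensor R_{ab}{}^c{}_d, with the convention
`(∇_a∇_b − ∇_b∇_a)X^c = R_{ab}{}^c{}_d X^d`. -/
def Riem (a b c d : Fin n) (x : Pt n) : ℝ :=
  pd a (fun y => G.Γ c b d y) x - pd b (fun y => G.Γ c a d y) x
    + ∑ e, (G.Γ c a e x * G.Γ e b d x - G.Γ c b e x * G.Γ e a d x)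

/-- (4,0)-curvature tensor R_{abcd} = g_{ce} R_{ab}{}^e{}_d. -/
def Riem4 (a b c d : Fin n) (x : Pt n) : ℝ :=
  ∑ e, G.g x c e * G.Riem a b e d x

/-- Ricci tensor R_{bd} = R_{cb}{}^c{}_d. -/
def Ricci (b d : Fin n) (x : Pt n) : ℝ := ∑ c, G.Riem c b c d x

/-- Scalar curvature R = g^{ab} R_{ab}. -/
def Scal (x : Pt n) : ℝ := ∑ a, ∑ b, G.ginv x a b * G.Ricci a b x

/-- Schouten tensor P_{ab} = (1/(n−2)) (R_{ab} − R/(2(n−1)) g_{ab}). -/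
def Schouten (a b : Fin n) (x : Pt n) : ℝ :=
  (1 / ((n : ℝ) - 2)) * (G.Ricci a b x - G.Scal x / (2 * ((n : ℝ) - 1)) * G.g x a b)

/-- Weyl tensor C_{abcd} = R_{abcd} − 2(g_{c[a}P_{b]d} + g_{d[b}P_{a]c}). -/
def Weyl (a b c d : Fin n) (x : Pt n) : ℝ :=
  G.Riem4 a b c d x -
    (G.g x c a * G.Schouten b d x - G.g x c b * G.Schouten a d x
      + G.g x d b * G.Schouten a c x - G.g x d a * G.Schouten b c x)

/-- Cotton tensor A_{abc} = ∇_b P_{ca} − ∇_c P_{ba} (= 2∇_{[b}P_{c]a}). -/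
def Cotton (a b c : Fin n) (x : Pt n) : ℝ :=
  G.cov2 (fun y i j => G.Schouten i j y) b c a x - G.cov2 (fun y i j => G.Schouten i j y) c b a x

/-- Bach tensor B_{ab} = ∇^c A_{acb} + P^{dc} C_{dacb}. -/
def Bach (a b : Fin n) (x : Pt n) : ℝ :=
  (∑ c, ∑ e, G.ginv x c e * G.cov3 (fun y i j k => G.Cotton i j k y) e a c b x)
    + ∑ d, ∑ c, (∑ i, ∑ j, G.ginv x d i * G.ginv x c j * G.Schouten i j x) * G.Weyl d a c b x

/-- `K` is a null vector field. -/
def IsNull (K : Pt n → Pt n) : Prop := ∀ x, G.ip x (K x) (K x) = 0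

/-- Pure radiation condition: Ric(X,·) = 0 for every vector X orthogonal to K. -/
def PureRadiation (K : Pt n → Pt n) : Prop :=
  ∀ x (X : Pt n), G.ip x (K x) X = 0 → ∀ b, (∑ a, G.Ricci a b x * X a) = 0

/-- Parallel rays condition: ∇_a K^b = f_a K^b. -/
def ParallelRays (K : Pt n → Pt n) (f : Pt n → Fin n → ℝ) : Prop :=
  ∀ x a b, G.covVec K a b x = f x a * K x b

/-- first (ℝ-) component of the tractor derivative of the tractor (ρ, X, σ):
∇_a ρ − P_{ab} X^b. -/
def trD0 (ρ : Pt n → ℝ) (X : Pt n → Pt n) (a : Fin n) (x : Pt n) : ℝ :=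
  pd a ρ x - ∑ b, G.Schouten a b x * X x b

/-- middle (TM-) component of the tractor derivative of the tractor (ρ, X, σ):
∇_a X^b + ρ δ_a{}^b + σ P_a{}^b. -/
def trD1 (ρ : Pt n → ℝ) (X : Pt n → Pt n) (σ : Pt n → ℝ) (a b : Fin n) (x : Pt n) : ℝ :=
  G.covVec X a b x + ρ x * (if a = b then (1:ℝ) else 0)
    + σ x * ∑ e, G.ginv x b e * G.Schouten a e x

/-- last (ℝ-) component of the tractor derivative of the tractor (ρ, X, σ):
∇_a σ − g_{ab} X^b. -/
def trD2 (X : Pt n → Pt n) (σ : Pt n → ℝ) (a : Fin n) (x : Pt n) : ℝ :=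
  pd a σ x - ∑ b, G.g x a b * X x b

end MetricG

section Aux
variable {n : ℕ}

lemma pd_mul {f g : Pt n → ℝ} {x : Pt n} (hf : DifferentiableAt ℝ f x)
    (hg : DifferentiableAt ℝ g x) (a : Fin n) :
    pd a (fun y => f y * g y) x = pd a f x * g x + f x * pd a g x := by
  unfold pd
  rw [fderiv_fun_mul hf hg]
  simp
  ring

lemma pd_exp2 {Υ : Pt n → ℝ} {x : Pt n} (hΥ : DifferentiableAt ℝ Υ x) (a : Fin n) :
    pd a (fun y => Real.exp (2 * Υ y)) x = Real.exp (2 * Υ x) * (2 * pd a Υ x) := by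
  have h1 : HasFDerivAt (fun y => 2 * Υ y) ((2:ℝ) • fderiv ℝ Υ x) x :=
    (hΥ.hasFDerivAt).const_mul 2
  have h2 := h1.exp
  unfold pd
  rw [h2.fderiv]
  simp [mul_comm]

/-- g is also a right inverse of ginv. -/
lemma ginv_right (G : MetricG n) (x : Pt n) (a c : Fin n) :
    (∑ b, G.g x a b * G.ginv x b c) = if a = c then (1:ℝ) else 0 := by
  classical
  set A : Matrix (Fin n) (Fin n) ℝ := Matrix.of (G.ginv x) with hA
  set M : Matrix (Fin n) (Fin n) ℝ := Matrix.of (G.g x) with hM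
  have hAM : A * M = 1 := by
    ext i j
    simp [Matrix.mul_apply, Matrix.one_apply, hA, hM, G.inv_mul x i j]
  have hMA : M * A = 1 := mul_eq_one_comm.mp hAM
  have := congrArg (fun (N : Matrix (Fin n) (Fin n) ℝ) => N a c) hMA
  simpa [Matrix.mul_apply, Matrix.one_apply, hA, hM] using this

/-- The inverse of the conformally rescaled metric. -/
lemma conf_ginv (G Ghat : MetricG n) (Υ : Pt n → ℝ)
    (hconf : ∀ x a b, Ghat.g x a b = Real.exp (2 * Υ x) * G.g x a b)
    (x : Pt n) (a b : Fin n) :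
    Ghat.ginv x a b = Real.exp (-(2 * Υ x)) * G.ginv x a b := by
  classical
  set A : Matrix (Fin n) (Fin n) ℝ := Matrix.of (Ghat.ginv x) with hA
  set M : Matrix (Fin n) (Fin n) ℝ := Matrix.of (Ghat.g x) with hM
  set B : Matrix (Fin n) (Fin n) ℝ :=
    Matrix.of (fun a b => Real.exp (-(2 * Υ x)) * G.ginv x a b) with hB
  have hAM : A * M = 1 := by
    ext i j
    simp [Matrix.mul_apply, Matrix.one_apply, hA, hM, Ghat.inv_mul x i j]
  have hBM : B * M = 1 := by
    ext i j
    have : ∀ k, B i k * M k j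
        = Real.exp (-(2*Υ x)) * Real.exp (2*Υ x) * (G.ginv x i k * G.g x k j) := by
      intro k; simp only [hB, hM, Matrix.of_apply, hconf]; ring
    simp only [Matrix.mul_apply, this]
    rw [← Finset.mul_sum, Real.exp_neg, inv_mul_cancel₀ (Real.exp_ne_zero _), one_mul,
      G.inv_mul x i j]
    simp [Matrix.one_apply]
  have hMB : M * B = 1 := mul_eq_one_comm.mp hBM
  have : A = B := by
    calc A = A * (M * B) := by rw [hMB, Matrix.mul_one]
    _ = (A * M) * B := by rw [Matrix.mul_assoc]
    _ = B := by rw [hAM, Matrix.one_mul]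
  have := congrArg (fun (N : Matrix (Fin n) (Fin n) ℝ) => N a b) this
  simpa [hA, hB] using this

/-- Conformal transformation of the Christoffel symbols. -/
lemma conf_Γ (G Ghat : MetricG n) (Υ : Pt n → ℝ) (hΥ : ContDiff ℝ (⊤ : ℕ∞) Υ)
    (hconf : ∀ x a b, Ghat.g x a b = Real.exp (2 * Υ x) * G.g x a b)
    (x : Pt n) (c a b : Fin n) :
    Ghat.Γ c a b x = G.Γ c a b x + (if c = b then (1:ℝ) else 0) * pd a Υ x
      + (if c = a then (1:ℝ) else 0) * pd b Υ x
      - G.g x a b * ∑ e, G.ginv x c e * pd e Υ x := by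
  classical
  have hΥd : ∀ y, DifferentiableAt ℝ Υ y := fun y => (hΥ.differentiable (by simp)) y
  have hed : DifferentiableAt ℝ (fun y => Real.exp (2 * Υ y)) x :=
    (((hΥd x).const_mul 2).exp)
  have hg : ∀ u v w, pd w (fun y => Ghat.g y u v) x
      = Real.exp (2 * Υ x) * (pd w (fun y => G.g y u v) x + 2 * pd w Υ x * G.g x u v) := by
    intro u v w
    have he : (fun y => Ghat.g y u v) = fun y => Real.exp (2 * Υ y) * G.g y u v :=
      funext fun y => hconf y u v
    rw [he, pd_mul hed ((G.smooth u v).differentiable (by simp) x), pd_exp2 (hΥd x)]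
    ring
  have hE : Real.exp (2 * Υ x) ≠ 0 := Real.exp_ne_zero _
  have key : ∀ d, Ghat.ginv x c d *
      (pd a (fun y => Ghat.g y d b) x + pd b (fun y => Ghat.g y d a) x
        - pd d (fun y => Ghat.g y a b) x)
      = G.ginv x c d * (pd a (fun y => G.g y d b) x + pd b (fun y => G.g y d a) x
          - pd d (fun y => G.g y a b) x)
        + 2 * pd a Υ x * (G.ginv x c d * G.g x d b)
        + 2 * pd b Υ x * (G.ginv x c d * G.g x d a)
        - 2 * G.g x a b * (G.ginv x c d * pd d Υ x) := by
    intro d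
    rw [conf_ginv G Ghat Υ hconf, hg, hg, hg, Real.exp_neg]
    field_simp
    ring
  unfold MetricG.Γ
  have hsum : (∑ d, Ghat.ginv x c d *
      (pd a (fun y => Ghat.g y d b) x + pd b (fun y => Ghat.g y d a) x
        - pd d (fun y => Ghat.g y a b) x))
      = (∑ d, G.ginv x c d * (pd a (fun y => G.g y d b) x + pd b (fun y => G.g y d a) x
          - pd d (fun y => G.g y a b) x))
        + 2 * pd a Υ x * (∑ d, G.ginv x c d * G.g x d b)
        + 2 * pd b Υ x * (∑ d, G.ginv x c d * G.g x d a)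
        - 2 * G.g x a b * (∑ d, G.ginv x c d * pd d Υ x) := by
    simp only [Finset.mul_sum]
    rw [← Finset.sum_add_distrib, ← Finset.sum_add_distrib, ← Finset.sum_sub_distrib]
    exact Finset.sum_congr rfl fun d _ => key d
  rw [hsum, G.inv_mul x c b, G.inv_mul x c a]
  ring

lemma ginv_symm (G : MetricG n) (x : Pt n) (a b : Fin n) :
    G.ginv x a b = G.ginv x b a := by
  classical
  set A : Matrix (Fin n) (Fin n) ℝ := Matrix.of (G.ginv x) with hA
  set M : Matrix (Fin n) (Fin n) ℝ := Matrix.of (G.g x) with hM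
  have hAM : A * M = 1 := by
    ext i j
    simp [Matrix.mul_apply, Matrix.one_apply, hA, hM, G.inv_mul x i j]
  have hMA : M * A = 1 := mul_eq_one_comm.mp hAM
  have hMT : M.transpose = M := by
    ext i j; simp [hM, Matrix.transpose_apply, G.symm]
  have hABt : M * A.transpose = 1 := by
    have := congrArg Matrix.transpose hAM
    rwa [Matrix.transpose_mul, Matrix.transpose_one, hMT] at this
  have : A = A.transpose := by
    calc A = A * (M * A.transpose) := by rw [hABt, Matrix.mul_one]
    _ = (A * M) * A.transpose := by rw [Matrix.mul_assoc]
    _ = A.transpose := by rw [hAM, Matrix.one_mul]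
  have := congrArg (fun (N : Matrix (Fin n) (Fin n) ℝ) => N a b) this
  simpa [hA, Matrix.transpose_apply] using this

/-- Contraction helper: g_{cb} ĝ^{be} v_e = v_c. -/
lemma contract_gv (g ginv : Fin n → Fin n → ℝ)
    (hright : ∀ a c, (∑ b, g a b * ginv b c) = if a = c then (1:ℝ) else 0)
    (v : Fin n → ℝ) (c : Fin n) :
    ∑ b, g c b * (∑ e, ginv b e * v e) = v c := by
  classical
  have h1 : ∀ b, g c b * (∑ e, ginv b e * v e) = ∑ e, (g c b * ginv b e) * v e := by
    intro b; rw [Finset.mul_sum]; exact Finset.sum_congr rfl fun e _ => by ring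
  simp only [h1]
  rw [Finset.sum_comm]
  have h2 : ∀ e, (∑ b, (g c b * ginv b e) * v e) = (if c = e then (1:ℝ) else 0) * v e := by
    intro e; rw [← Finset.sum_mul, hright c e]
  simp only [h2]
  simp

/-- Contraction helper: ĝ^{ac} g_{ce} w^e = w^a. -/
lemma contract_invg (g ginv : Fin n → Fin n → ℝ)
    (hinv : ∀ a c, (∑ b, ginv a b * g b c) = if a = c then (1:ℝ) else 0)
    (w : Fin n → ℝ) (a : Fin n) :
    ∑ c, ginv a c * (∑ e, g c e * w e) = w a := by
  classical
  have h1 : ∀ c, ginv a c * (∑ e, g c e * w e) = ∑ e, (ginv a c * g c e) * w e := by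
    intro c; rw [Finset.mul_sum]; exact Finset.sum_congr rfl fun e _ => by ring
  simp only [h1]
  rw [Finset.sum_comm]
  have h2 : ∀ e, (∑ c, (ginv a c * g c e) * w e) = (if a = e then (1:ℝ) else 0) * w e := by
    intro e; rw [← Finset.sum_mul, hinv a e]
  simp only [h2]
  simp

/-- The pointwise linear-algebra core of the argument. -/
lemma algebra_core (hn3 : 3 ≤ n) (g ginv : Fin n → Fin n → ℝ)
    (hsymm : ∀ a b, g a b = g b a)
    (hinv : ∀ a c, (∑ b, ginv a b * g b c) = if a = c then (1:ℝ) else 0)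
    (hright : ∀ a c, (∑ b, g a b * ginv b c) = if a = c then (1:ℝ) else 0)
    (K : Fin n → ℝ) (hK : K ≠ 0)
    (hnull : (∑ a, ∑ b, g a b * K a * K b) = 0)
    (φv : ℝ) (hφ : φv ≠ 0) (H Υa : Fin n → ℝ)
    (E : ∀ a b, H a * K b + φv * ((if a = b then (1:ℝ) else 0) * (∑ c, Υa c * K c)
        - (∑ c, g a c * K c) * (∑ e, ginv b e * Υa e)) = 0) :
    ∀ a, H a = φv * Υa a := by
  classical
  set Ka : Fin n → ℝ := fun a => ∑ c, g a c * K c with hKa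
  set Υup : Fin n → ℝ := fun b => ∑ e, ginv b e * Υa e with hΥup
  set ΥK : ℝ := ∑ c, Υa c * K c with hΥK
  set HK : ℝ := ∑ a, H a * K a with hHK
  -- trace identity: ∑ Ka a * Υup a = ΥK
  have s1 : (∑ a, Ka a * Υup a) = ΥK := by
    have h1 : ∀ a, Ka a * Υup a = ∑ c, (g a c * Υup a) * K c := by
      intro a; rw [hKa]; simp only [Finset.sum_mul]
      exact Finset.sum_congr rfl fun c _ => by ring
    rw [Finset.sum_congr rfl fun a _ => h1 a, Finset.sum_comm]
    have h2 : ∀ c, (∑ a, (g a c * Υup a) * K c) = Υa c * K c := by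
      intro c
      rw [← Finset.sum_mul]
      congr 1
      have := contract_gv g ginv hright Υa c
      rw [← this]
      exact Finset.sum_congr rfl fun a _ => by rw [hsymm a c]
    rw [Finset.sum_congr rfl fun c _ => h2 c, hΥK]
  -- null identity: ∑ K a * Ka a = 0
  have s2 : (∑ a, K a * Ka a) = 0 := by
    rw [← hnull]
    exact Finset.sum_congr rfl fun a _ => by
      rw [hKa, Finset.mul_sum]
      exact Finset.sum_congr rfl fun c _ => by ring
  -- trace of E
  have tr : HK + φv * (((n:ℝ) - 1) * ΥK) = 0 := by
    have h := Finset.sum_congr rfl (fun a (_ : a ∈ Finset.univ) => (E a a))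
    rw [Finset.sum_const] at h
    have hexp : (∑ a, (H a * K a + φv * ((if a = a then (1:ℝ) else 0) * ΥK - Ka a * Υup a)))
        = HK + φv * ((n:ℝ) * ΥK - ∑ a, Ka a * Υup a) := by
      rw [Finset.sum_add_distrib, ← Finset.mul_sum, Finset.sum_sub_distrib]
      simp [hHK, Finset.mul_sum]
    rw [hexp, s1] at h
    simp at h
    linarith [h]
  -- contraction of E with K
  have ctr : ∀ b, (HK + φv * ΥK) * K b = 0 := by
    intro b
    have h : (∑ a, K a * (H a * K b + φv * ((if a = b then (1:ℝ) else 0) * ΥK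
        - Ka a * Υup b))) = 0 := by
      rw [Finset.sum_congr rfl fun a _ => by rw [E a b, mul_zero]]
      simp
    have hexp : ∀ a, K a * (H a * K b + φv * ((if a = b then (1:ℝ) else 0) * ΥK
        - Ka a * Υup b))
        = (H a * K a) * K b + φv * ΥK * (if a = b then K a else 0)
          - (φv * Υup b) * (K a * Ka a) := by
      intro a
      by_cases hab : a = b <;> simp [hab] <;> ring
    rw [Finset.sum_congr rfl fun a _ => hexp a, Finset.sum_sub_distrib,
      Finset.sum_add_distrib, ← Finset.sum_mul, ← Finset.mul_sum, ← Finset.mul_sum,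
      Finset.sum_ite_eq' Finset.univ b K, s2, ← hHK] at h
    simp only [Finset.mem_univ, if_true, mul_zero, sub_zero] at h
    linear_combination h
  obtain ⟨b0, hb0⟩ : ∃ b0, K b0 ≠ 0 := Function.ne_iff.mp hK
  have hHKΥ : HK + φv * ΥK = 0 := by
    have := ctr b0
    rcases mul_eq_zero.mp this with h | h
    · exact h
    · exact absurd h hb0
  have hΥK0 : ΥK = 0 := by
    have hn' : ((n:ℝ) - 2) ≠ 0 := by
      have : (3:ℝ) ≤ (n:ℝ) := by exact_mod_cast hn3
      linarith
    have : φv * (((n:ℝ) - 2) * ΥK) = 0 := by linarith [tr, hHKΥ]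
    rcases mul_eq_zero.mp this with h | h
    · exact absurd h hφ
    · rcases mul_eq_zero.mp h with h' | h'
      · exact absurd h' hn'
      · exact h'
  -- reduced equation
  have E' : ∀ a b, H a * K b = φv * (Ka a * Υup b) := by
    intro a b
    have t := E a b
    rw [hΥK0] at t
    show H a * K b = φv * ((∑ c, g a c * K c) * (∑ e, ginv b e * Υa e))
    linear_combination t
  -- lowered equation
  have F : ∀ a c, H a * Ka c = φv * (Ka a * Υa c) := by
    intro a c
    have h : (∑ b, g c b * (H a * K b)) = ∑ b, g c b * (φv * (Ka a * Υup b)) :=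
      Finset.sum_congr rfl fun b _ => by rw [E' a b]
    have hl : (∑ b, g c b * (H a * K b)) = H a * Ka c := by
      rw [hKa, Finset.mul_sum]
      exact Finset.sum_congr rfl fun b _ => by ring
    have hr : (∑ b, g c b * (φv * (Ka a * Υup b))) = φv * (Ka a * Υa c) := by
      have h1 : (∑ b, g c b * (φv * (Ka a * Υup b)))
          = φv * Ka a * (∑ b, g c b * Υup b) := by
        rw [Finset.mul_sum]
        exact Finset.sum_congr rfl fun b _ => by ring
      rw [h1, hΥup]
      rw [contract_gv g ginv hright Υa c]
      ring
    rw [hl, hr] at h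
    exact h
  -- Ka is nonzero somewhere
  obtain ⟨c0, hc0⟩ : ∃ c0, Ka c0 ≠ 0 := by
    by_contra hall
    push_neg at hall
    apply hb0
    have : K b0 = ∑ c, ginv b0 c * (∑ e, g c e * K e) :=
      (contract_invg g ginv hinv K b0).symm
    rw [this]
    rw [Finset.sum_congr rfl fun c _ => by rw [show (∑ e, g c e * K e) = Ka c from rfl, hall c, mul_zero]]
    simp
  -- conclude
  have hH0 : H c0 = φv * Υa c0 := by
    have h2 : (H c0 - φv * Υa c0) * Ka c0 = 0 := by linear_combination F c0 c0
    rcases mul_eq_zero.mp h2 with h | h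
    · linarith
    · exact absurd h hc0
  intro a
  have h1 := F a c0
  have h2 := F c0 a
  have h3 : (H a - φv * Υa a) * Ka c0 = 0 := by
    linear_combination h1 + Ka a * hH0.symm + h2
  rcases mul_eq_zero.mp h3 with h | h
  · linarith
  · exact absurd h hc0

lemma Γ_symm (G : MetricG n) (x : Pt n) (c a b : Fin n) : G.Γ c a b x = G.Γ c b a x := by
  unfold MetricG.Γ
  congr 1
  apply Finset.sum_congr rfl
  intro d _
  have hab : (fun y => G.g y a b) = fun y => G.g y b a := funext fun y => G.symm y a b
  rw [hab]
  ring

/-- Evaluation of a continuous linear functional via the coordinate basis. -/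
lemma clm_basis (T : Pt n →L[ℝ] ℝ) (v : Pt n) :
    T v = ∑ i, v i * T (Pi.single i 1) := by
  classical
  have hv : v = ∑ i, v i • (Pi.single i 1 : Pt n) := by
    have h1 : ∀ i, v i • (Pi.single i 1 : Pt n) = Pi.single i (v i) := by
      intro i
      ext j
      by_cases h : j = i <;> simp [Pi.single_apply, h]
    rw [Finset.sum_congr rfl fun i _ => h1 i, Finset.univ_sum_single]
  conv_lhs => rw [hv]
  rw [map_sum]
  exact Finset.sum_congr rfl fun i _ => by rw [map_smul]; simp

/-- Schwarz/Clairaut argument: if dφ = -φ f with f smooth and φ nowhere zero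
and differentiable, then f is closed. -/
lemma pd_f_comm {f : Pt n → Fin n → ℝ} {φ : Pt n → ℝ}
    (hfs : SmoothForm f) (hφd : Differentiable ℝ φ) (hφ0 : ∀ x, φ x ≠ 0)
    (key : ∀ x a, pd a φ x = -(f x a * φ x)) (x : Pt n) (a b : Fin n) :
    pd a (fun y => f y b) x = pd b (fun y => f y a) x := by
  classical
  set F : Pt n → Pt n := fun y i => -(f y i * φ y) with hF
  have hFid : ∀ i, Differentiable ℝ (fun y => F y i) := fun i =>
    (((hfs i).differentiable (by simp)).mul hφd).neg
  have hFd : Differentiable ℝ F := fun y =>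
    differentiableAt_pi.mpr fun i => hFid i y
  set L : Pt n →L[ℝ] (Pt n →L[ℝ] ℝ) :=
    ∑ i : Fin n, (ContinuousLinearMap.proj i : Pt n →L[ℝ] ℝ).smulRight
      (ContinuousLinearMap.proj i) with hLdef
  have hL : ∀ w v, L w v = ∑ i, w i * v i := by
    intro w v
    simp [hLdef, ContinuousLinearMap.sum_apply, smul_eq_mul]
  have hLsingle : ∀ (w : Pt n) (i : Fin n), L w (Pi.single i 1) = w i := by
    intro w i
    rw [hL]
    simp [Pi.single_apply]
  have hfd' : ∀ y, HasFDerivAt φ (L (F y)) y := by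
    intro y
    have h0 : HasFDerivAt φ (fderiv ℝ φ y) y := (hφd y).hasFDerivAt
    have heq : L (F y) = fderiv ℝ φ y := by
      apply ContinuousLinearMap.ext
      intro v
      rw [clm_basis (L (F y)) v, clm_basis (fderiv ℝ φ y) v]
      apply Finset.sum_congr rfl
      intro i _
      rw [hLsingle]
      have h2 : (fderiv ℝ φ y) (Pi.single i 1) = pd i φ y := rfl
      rw [h2, key y i]
    exact heq ▸ h0
  have hC : HasFDerivAt (fun y => L (F y)) (L.comp (fderiv ℝ F x)) x :=
    (L.hasFDerivAt).comp x (hFd x).hasFDerivAt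
  have hsym := second_derivative_symmetric hfd' hC (Pi.single a 1) (Pi.single b 1)
  have hcomp : ∀ u v : Fin n,
      (L.comp (fderiv ℝ F x)) (Pi.single u 1) (Pi.single v 1)
        = pd u (fun y => F y v) x := by
    intro u v
    rw [ContinuousLinearMap.comp_apply, hLsingle]
    rw [show F = (fun y i => F y i) from rfl, fderiv_pi (fun i => hFid i x)]
    rfl
  rw [hcomp, hcomp] at hsym
  -- expand
  have hexp : ∀ u v : Fin n, pd u (fun y => F y v) x
      = -(pd u (fun y => f y v) x * φ x + f x v * pd u φ x) := by
    intro u v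
    have h1 : (fun y => F y v) = fun y => -(f y v * φ y) := rfl
    rw [h1]
    have h2 : pd u (fun y => -(f y v * φ y)) x = -pd u (fun y => f y v * φ y) x := by
      unfold pd
      rw [fderiv_fun_neg]
      simp
    rw [h2, pd_mul ((hfs v).differentiable (by simp) x) (hφd x)]
  rw [hexp, hexp, key, key] at hsym
  have h3 : (pd a (fun y => f y b) x - pd b (fun y => f y a) x) * φ x = 0 := by
    linear_combination -hsym
  rcases mul_eq_zero.mp h3 with h | h
  · linarith
  · exact absurd h (hφ0 x)

end Aux
/-- Parallel rescalability is conformally invariant: If K spans a parallel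
ray for g (∇_a K^b = f_a K^b) and K cannot be rescaled to a g-parallel vector field
(∇_{[a}f_{b]} ≠ 0), then for every conformally rescaled metric ĝ = e^{2Υ}g there is no
nowhere-zero function φ such that φK is ĝ-parallel. -/
theorem stmt_11 {n : ℕ} (hn : 3 ≤ n) (G : MetricG n) (K : Pt n → Pt n) (f : Pt n → Fin n → ℝ)
    (hKs : SmoothVF K) (hfs : SmoothForm f) (hK0 : ∀ x, K x ≠ 0) (hnull : G.IsNull K)
    (hray : G.ParallelRays K f)
    (hnc : ¬ ∀ x a b, G.cov1 f a b x = G.cov1 f b a x)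
    (Υ : Pt n → ℝ) (hΥ : ContDiff ℝ (⊤ : ℕ∞) Υ) (Ghat : MetricG n)
    (hconf : ∀ x a b, Ghat.g x a b = Real.exp (2 * Υ x) * G.g x a b) :
    ¬ ∃ φ : Pt n → ℝ, Differentiable ℝ φ ∧ (∀ x, φ x ≠ 0) ∧
        ∀ x a b, Ghat.covVec (fun y => φ y • K y) a b x = 0 := by
  rintro ⟨φ, hφd, hφ0, hpar⟩
  -- Step 1: dφ = -φ f
  have key : ∀ x a, pd a φ x = -(f x a * φ x) := by
    intro x a0
    have E : ∀ a b, (pd a φ x + (f x a + pd a Υ x) * φ x) * K x b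
        + φ x * ((if a = b then (1:ℝ) else 0) * (∑ c, pd c Υ x * K x c)
          - (∑ c, G.g x a c * K x c) * (∑ e, G.ginv x b e * pd e Υ x)) = 0 := by
      intro a b
      have h0 : pd a (fun y => φ y * K y b) x
          + ∑ c, Ghat.Γ b a c x * (φ x * K x c) = 0 := hpar x a b
      have hr : pd a (fun y => K y b) x + ∑ c, G.Γ b a c x * K x c
          = f x a * K x b := hray x a b
      rw [pd_mul (hφd x) ((hKs b).differentiable (by simp) x) a] at h0
      have hA : (∑ c, Ghat.Γ b a c x * (φ x * K x c))
          = (∑ c, G.Γ b a c x * K x c) * φ x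
            + K x b * (pd a Υ x * φ x)
            + ((if a = b then (1:ℝ) else 0) * φ x) * (∑ c, pd c Υ x * K x c)
            + (-((∑ e, G.ginv x b e * pd e Υ x) * φ x)) * (∑ c, G.g x a c * K x c) := by
        have step : ∀ c, Ghat.Γ b a c x * (φ x * K x c)
            = (G.Γ b a c x * K x c) * φ x
              + (if b = c then K x c else 0) * (pd a Υ x * φ x)
              + ((if a = b then (1:ℝ) else 0) * φ x) * (pd c Υ x * K x c)
              + (-((∑ e, G.ginv x b e * pd e Υ x) * φ x)) * (G.g x a c * K x c) := by
          intro c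
          rw [conf_Γ G Ghat Υ hΥ hconf x b a c]
          rcases eq_or_ne b c with hbc | hbc <;> rcases eq_or_ne a b with hab | hab
          · simp only [if_pos hbc, if_pos hab, if_pos hab.symm]; ring
          · simp only [if_pos hbc, if_neg hab, if_neg (Ne.symm hab)]; ring
          · simp only [if_neg hbc, if_pos hab, if_pos hab.symm]; ring
          · simp only [if_neg hbc, if_neg hab, if_neg (Ne.symm hab)]; ring
        rw [Finset.sum_congr rfl fun c _ => step c]
        simp only [Finset.sum_add_distrib, ← Finset.sum_mul, ← Finset.mul_sum]
        rw [Finset.sum_ite_eq Finset.univ b (fun c => K x c)]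
        simp
      rw [hA] at h0
      linear_combination h0 - φ x * hr
    have hnull' : (∑ a, ∑ b, G.g x a b * K x a * K x b) = 0 := hnull x
    have hcore := algebra_core hn (G.g x) (G.ginv x) (fun a b => G.symm x a b)
      (G.inv_mul x) (ginv_right G x) (K x) (hK0 x) hnull' (φ x) (hφ0 x)
      (fun a => pd a φ x + (f x a + pd a Υ x) * φ x) (fun a => pd a Υ x) E
    linear_combination hcore a0
  -- Step 2: closedness of f, contradiction
  apply hnc
  intro x a b
  unfold MetricG.cov1
  rw [pd_f_comm hfs hφd hφ0 key x a b]
  congr 1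
  exact Finset.sum_congr rfl fun e _ => by rw [Γ_symm]
end
end

section
/- A pseudo-Riemannian pp-wave (parallel null vector K with R(X,Y,·,·)=0 for all X,Y ⊥ K) is a pure radiation metric aligned with K, and its Weyl and Cotton tensors satisfy C_{abcd}K^a = 0, C_{abcd}X^aY^b = 0, and A_{cab}X^aY^b = 0 for all X,Y orthogonal to K. -/
/- A coordinate-chart framework for pseudo-Riemannian geometry on ℝⁿ:
metric, Christoffel symbols, covariant derivatives, curvature, Ricci,
Schouten, Weyl, Cotton and Bach tensors, and the standard tractor
connection, all written in index notation. -/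

noncomputable section

open scoped BigOperators

namespace PPW
variable {n : ℕ}

lemma pd_congr {f g : Pt n → ℝ} {x : Pt n} (h : f =ᶠ[nhds x] g) (a : Fin n) :
    pd a f x = pd a g x := by
  unfold pd; rw [Filter.EventuallyEq.fderiv_eq h]

lemma pd_smooth {f : Pt n → ℝ} (hf : ContDiff ℝ (⊤ : ℕ∞) f) (a : Fin n) :
    ContDiff ℝ (⊤ : ℕ∞) (fun x => pd a f x) :=
  (hf.fderiv_right (by simp)).clm_apply contDiff_const

lemma pd_add {f g : Pt n → ℝ} {x : Pt n} (hf : DifferentiableAt ℝ f x)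
    (hg : DifferentiableAt ℝ g x) (a : Fin n) :
    pd a (fun y => f y + g y) x = pd a f x + pd a g x := by
  unfold pd; rw [fderiv_fun_add hf hg]; rfl

lemma pd_neg {f : Pt n → ℝ} {x : Pt n} (a : Fin n) :
    pd a (fun y => -f y) x = - pd a f x := by
  unfold pd; rw [fderiv_fun_neg]; rfl

lemma pd_sub {f g : Pt n → ℝ} {x : Pt n} (hf : DifferentiableAt ℝ f x)
    (hg : DifferentiableAt ℝ g x) (a : Fin n) :
    pd a (fun y => f y - g y) x = pd a f x - pd a g x := by
  unfold pd; rw [fderiv_fun_sub hf hg]; rfl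

lemma pd_mul {f g : Pt n → ℝ} {x : Pt n} (hf : DifferentiableAt ℝ f x)
    (hg : DifferentiableAt ℝ g x) (a : Fin n) :
    pd a (fun y => f y * g y) x = f x * pd a g x + g x * pd a f x := by
  unfold pd; rw [fderiv_fun_mul hf hg]; simp [smul_eq_mul]

lemma pd_const {x : Pt n} (a : Fin n) (c : ℝ) : pd a (fun _ => c) x = 0 := by
  unfold pd; rw [fderiv_fun_const]; simp

lemma pd_const_mul {f : Pt n → ℝ} {x : Pt n} (hf : DifferentiableAt ℝ f x) (a : Fin n) (c : ℝ) :
    pd a (fun y => c * f y) x = c * pd a f x := by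
  unfold pd; rw [fderiv_const_mul hf]; rfl

lemma pd_sum {ι : Type*} {s : Finset ι} {f : ι → Pt n → ℝ} {x : Pt n}
    (h : ∀ i ∈ s, DifferentiableAt ℝ (f i) x) (a : Fin n) :
    pd a (fun y => ∑ i ∈ s, f i y) x = ∑ i ∈ s, pd a (f i) x := by
  unfold pd; rw [fderiv_fun_sum h]; simp

lemma pd_comm {f : Pt n → ℝ} (hf : ContDiff ℝ (⊤ : ℕ∞) f) (a b : Fin n) (x : Pt n) :
    pd a (fun y => pd b f y) x = pd b (fun y => pd a f y) x := by
  have hd : ∀ y, HasFDerivAt f (fderiv ℝ f y) y := fun y =>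
    (hf.differentiable (by simp) y).hasFDerivAt
  have h2 : ContDiff ℝ (⊤ : ℕ∞) (fderiv ℝ f) := hf.fderiv_right (by simp)
  have hx : HasFDerivAt (fderiv ℝ f) (fderiv ℝ (fderiv ℝ f) x) x :=
    (h2.differentiable (by simp) x).hasFDerivAt
  have key := second_derivative_symmetric hd hx
  have expand : ∀ v w : Pt n,
      fderiv ℝ (fun y => fderiv ℝ f y v) x w = fderiv ℝ (fderiv ℝ f) x w v := by
    intro v w
    have h3 : HasFDerivAt (fun y => fderiv ℝ f y v)
        ((fderiv ℝ (fderiv ℝ f) x).flip v) x := hx.clm_apply (hasFDerivAt_const v x) |>.congr_fderiv (by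
          ext w; simp)
    rw [h3.fderiv]; rfl
  show fderiv ℝ (fun y => fderiv ℝ f y (Pi.single b 1)) x (Pi.single a 1) =
    fderiv ℝ (fun y => fderiv ℝ f y (Pi.single a 1)) x (Pi.single b 1)
  rw [expand, expand, key]

lemma contDiff_prod {ι : Type*} (s : Finset ι) (f : ι → Pt n → ℝ)
    (h : ∀ i ∈ s, ContDiff ℝ (⊤ : ℕ∞) (f i)) :
    ContDiff ℝ (⊤ : ℕ∞) (fun x => ∏ i ∈ s, f i x) := by
  classical
  induction s using Finset.cons_induction with
  | empty => simpa using contDiff_const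
  | cons i s hi ih =>
    simp only [Finset.prod_cons]
    exact (h i (Finset.mem_cons_self _ _)).mul
      (ih fun j hj => h j (Finset.mem_cons_of_mem hj))

lemma contDiff_det (M : Pt n → Matrix (Fin n) (Fin n) ℝ)
    (h : ∀ a b, ContDiff ℝ (⊤ : ℕ∞) fun x => M x a b) :
    ContDiff ℝ (⊤ : ℕ∞) fun x => (M x).det := by
  simp only [Matrix.det_apply]
  apply ContDiff.sum; intro σ _
  have h1 : ContDiff ℝ (⊤ : ℕ∞) fun x => ∏ i, M x (σ i) i :=
    contDiff_prod _ _ (fun i _ => h _ _)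
  have : (fun x => Equiv.Perm.sign σ • ∏ i, M x (σ i) i)
      = fun x => ((Equiv.Perm.sign σ : ℤ) : ℝ) * ∏ i, M x (σ i) i := by
    funext x; simp [Units.smul_def, zsmul_eq_mul]
  rw [this]
  exact contDiff_const.mul h1


section Met
variable (G : MetricG n)

def gm (x : Pt n) : Matrix (Fin n) (Fin n) ℝ := Matrix.of fun a b => G.g x a b
def gim (x : Pt n) : Matrix (Fin n) (Fin n) ℝ := Matrix.of fun a b => G.ginv x a b

lemma gim_mul_gm (x : Pt n) : gim G x * gm G x = 1 := by
  ext a c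
  simp only [Matrix.mul_apply, gim, gm, Matrix.of_apply, Matrix.one_apply]
  exact G.inv_mul x a c

lemma gm_mul_gim (x : Pt n) : gm G x * gim G x = 1 :=
  mul_eq_one_comm.mp (gim_mul_gm G x)

lemma mul_inv (x : Pt n) (a c : Fin n) :
    (∑ b, G.g x a b * G.ginv x b c) = if a = c then (1:ℝ) else 0 := by
  have h2 : (gm G x * gim G x) a c = (1 : Matrix (Fin n) (Fin n) ℝ) a c := by
    rw [gm_mul_gim]
  simpa [Matrix.mul_apply, Matrix.one_apply, gm, gim] using h2

lemma gim_eq_inv (x : Pt n) : gim G x = (gm G x)⁻¹ :=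
  (Matrix.inv_eq_left_inv (gim_mul_gm G x)).symm

lemma ginv_symm (x : Pt n) (a b : Fin n) : G.ginv x a b = G.ginv x b a := by
  have hT : (gm G x).transpose = gm G x := by
    ext i j; simp only [Matrix.transpose_apply, gm, Matrix.of_apply]; exact (G.symm x j i)
  have h := Matrix.transpose_nonsing_inv (gm G x)
  rw [hT] at h
  have h2 : (gim G x).transpose = gim G x := by rw [gim_eq_inv, h]
  have := congrFun (congrFun h2 a) b
  simpa [Matrix.transpose_apply, gim] using this.symm

lemma gdet_ne (x : Pt n) : (gm G x).det ≠ 0 := by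
  have h : (gim G x).det * (gm G x).det = 1 := by
    rw [← Matrix.det_mul, gim_mul_gm, Matrix.det_one]
  intro h0; rw [h0, mul_zero] at h; exact zero_ne_one h

lemma ginv_eq (x : Pt n) (a b : Fin n) :
    G.ginv x a b = (gm G x).adjugate a b / (gm G x).det := by
  have h : G.ginv x a b = (gm G x)⁻¹ a b := by
    rw [← gim_eq_inv]; rfl
  rw [h, Matrix.inv_def, Matrix.smul_apply, smul_eq_mul, Ring.inverse_eq_inv']
  rw [div_eq_inv_mul]

lemma ginv_smooth (a b : Fin n) : ContDiff ℝ (⊤ : ℕ∞) fun x => G.ginv x a b := by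
  have hdet : ContDiff ℝ (⊤ : ℕ∞) fun x => (gm G x).det :=
    contDiff_det (gm G) (fun i j => G.smooth i j)
  have hadj : ContDiff ℝ (⊤ : ℕ∞) fun x => (gm G x).adjugate a b := by
    simp only [Matrix.adjugate_apply]
    apply contDiff_det
    intro i j
    by_cases h : i = b
    · simp only [Matrix.updateRow_apply, h, if_pos rfl]; exact contDiff_const
    · simp only [Matrix.updateRow_apply, h, if_false]; exact G.smooth i j
  have h := hadj.div hdet (fun x => gdet_ne G x)
  have he : (fun x => G.ginv x a b) = fun x => (gm G x).adjugate a b / (gm G x).det :=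
    funext fun x => ginv_eq G x a b
  rw [he]; exact h

/-- Lowered Christoffel symbols. -/
def Γl (c a b : Fin n) (x : Pt n) : ℝ :=
  (1/2) * (pd a (fun y => G.g y c b) x + pd b (fun y => G.g y c a) x
    - pd c (fun y => G.g y a b) x)

lemma g_fun_symm (a b : Fin n) : (fun y => G.g y a b) = fun y => G.g y b a :=
  funext fun y => G.symm y a b

lemma Γl_symm (c a b : Fin n) (x : Pt n) : Γl G c a b x = Γl G c b a x := by
  unfold Γl; rw [g_fun_symm G a b]; ring

lemma Γl_smooth (c a b : Fin n) : ContDiff ℝ (⊤ : ℕ∞) fun x => Γl G c a b x := by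
  unfold Γl
  exact contDiff_const.mul (((pd_smooth (G.smooth c b) a).add
    (pd_smooth (G.smooth c a) b)).sub (pd_smooth (G.smooth a b) c))

lemma gΓ (x : Pt n) (c a b : Fin n) :
    (∑ e, G.g x c e * G.Γ e a b x) = Γl G c a b x := by
  unfold MetricG.Γ Γl
  set S : Fin n → ℝ := fun d => pd a (fun y => G.g y d b) x + pd b (fun y => G.g y d a) x
    - pd d (fun y => G.g y a b) x with hS
  calc (∑ e, G.g x c e * ((1/2) * ∑ d, G.ginv x e d * S d))
      = ∑ e, ∑ d, (1/2) * S d * (G.g x c e * G.ginv x e d) := by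
        apply Finset.sum_congr rfl; intro e _
        rw [Finset.mul_sum, Finset.mul_sum]
        apply Finset.sum_congr rfl; intro d _; ring
    _ = ∑ d, ∑ e, (1/2) * S d * (G.g x c e * G.ginv x e d) := Finset.sum_comm
    _ = ∑ d, (1/2) * S d * (∑ e, G.g x c e * G.ginv x e d) := by
        apply Finset.sum_congr rfl; intro d _; rw [Finset.mul_sum]
    _ = ∑ d, (1/2) * S d * (if c = d then 1 else 0) := by
        apply Finset.sum_congr rfl; intro d _; rw [mul_inv]
    _ = (1/2) * S c := by simp

lemma pdg (x : Pt n) (a b c : Fin n) :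
    pd a (fun y => G.g y b c) x = Γl G b a c x + Γl G c a b x := by
  unfold Γl
  rw [g_fun_symm G c b, g_fun_symm G c a, g_fun_symm G b a]
  ring

lemma Γ_eq (c a b : Fin n) (x : Pt n) :
    G.Γ c a b x = ∑ d, G.ginv x c d * Γl G d a b x := by
  unfold MetricG.Γ Γl
  rw [Finset.mul_sum]
  apply Finset.sum_congr rfl; intro d _; ring

lemma Γ_smooth (c a b : Fin n) : ContDiff ℝ (⊤ : ℕ∞) fun x => G.Γ c a b x := by
  have he : (fun x => G.Γ c a b x) = fun x => ∑ d, G.ginv x c d * Γl G d a b x :=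
    funext fun x => Γ_eq G c a b x
  rw [he]
  exact ContDiff.sum fun d _ => (ginv_smooth G c d).mul (Γl_smooth G d a b)

lemma Γ_symm (c a b : Fin n) (x : Pt n) : G.Γ c a b x = G.Γ c b a x := by
  rw [Γ_eq, Γ_eq]
  exact Finset.sum_congr rfl fun d _ => by rw [Γl_symm]

end Met


section Curv
variable (G : MetricG n)

/-- quadratic Christoffel term. -/
def Q (a c b d : Fin n) (x : Pt n) : ℝ :=
  ∑ e, ∑ f, G.ginv x e f * Γl G e a c x * Γl G f b d x

/-- closed-form curvature expression. -/
def Ecurv (a b c d : Fin n) (x : Pt n) : ℝ :=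
  (1/2) * (pd a (fun y => pd d (fun z => G.g z b c) y) x
    + pd b (fun y => pd c (fun z => G.g z a d) y) x
    - pd a (fun y => pd c (fun z => G.g z b d) y) x
    - pd b (fun y => pd d (fun z => G.g z a c) y) x)
  - Q G a c b d x + Q G b c a d x

lemma Q_pair (a c b d : Fin n) (x : Pt n) : Q G a c b d x = Q G b d a c x := by
  unfold Q
  rw [Finset.sum_comm]
  apply Finset.sum_congr rfl; intro f _
  apply Finset.sum_congr rfl; intro e _
  rw [ginv_symm G x f e]; ring

lemma Q_left (a c b d : Fin n) (x : Pt n) : Q G a c b d x = Q G c a b d x := by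
  unfold Q
  apply Finset.sum_congr rfl; intro e _
  apply Finset.sum_congr rfl; intro f _
  rw [Γl_symm G e a c]

lemma Q_right (a c b d : Fin n) (x : Pt n) : Q G a c b d x = Q G a c d b x := by
  rw [Q_pair, Q_left, Q_pair]

lemma pdpd_comm (x : Pt n) (p q r s : Fin n) :
    pd p (fun y => pd q (fun z => G.g z r s) y) x
      = pd q (fun y => pd p (fun z => G.g z r s) y) x :=
  pd_comm (G.smooth r s) p q x

lemma pdpd_gsym (x : Pt n) (p q r s : Fin n) :
    pd p (fun y => pd q (fun z => G.g z r s) y) x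
      = pd p (fun y => pd q (fun z => G.g z s r) y) x := by
  rw [g_fun_symm G r s]

lemma g_pdΓ (x : Pt n) (a b c d : Fin n) :
    (∑ e, G.g x c e * pd a (fun y => G.Γ e b d y) x)
      = pd a (fun y => Γl G c b d y) x
        - ∑ e, (Γl G c a e x + Γl G e a c x) * G.Γ e b d x := by
  have dg : ∀ p q, DifferentiableAt ℝ (fun y => G.g y p q) x := fun p q =>
    ((G.smooth p q).differentiable (by simp)).differentiableAt
  have dΓ : ∀ e p q, DifferentiableAt ℝ (fun y => G.Γ e p q y) x := fun e p q =>
    ((Γ_smooth G e p q).differentiable (by simp)).differentiableAt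
  have h1 : (fun y => Γl G c b d y) = fun y => ∑ e, G.g y c e * G.Γ e b d y :=
    funext fun y => (gΓ G y c b d).symm
  have h2 : pd a (fun y => Γl G c b d y) x
      = ∑ e, (G.g x c e * pd a (fun y => G.Γ e b d y) x
          + G.Γ e b d x * pd a (fun y => G.g y c e) x) := by
    rw [h1, pd_sum (fun e _ => (dg c e).fun_mul (dΓ e b d)) a]
    exact Finset.sum_congr rfl fun e _ => pd_mul (dg c e) (dΓ e b d) a
  rw [h2, Finset.sum_add_distrib]
  have h3 : (∑ e, G.Γ e b d x * pd a (fun y => G.g y c e) x)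
      = ∑ e, (Γl G c a e x + Γl G e a c x) * G.Γ e b d x := by
    apply Finset.sum_congr rfl; intro e _
    rw [pdg G x a c e]; ring
  rw [h3]; ring

lemma pd_Γl (x : Pt n) (a c b d : Fin n) :
    pd a (fun y => Γl G c b d y) x
      = (1/2) * (pd a (fun y => pd b (fun z => G.g z c d) y) x
          + pd a (fun y => pd d (fun z => G.g z c b) y) x
          - pd a (fun y => pd c (fun z => G.g z b d) y) x) := by
  have dpd : ∀ p r s, DifferentiableAt ℝ (fun y => pd p (fun z => G.g z r s) y) x :=
    fun p r s => ((pd_smooth (G.smooth r s) p).differentiable (by simp)).differentiableAt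
  unfold Γl
  rw [pd_const_mul (((dpd b c d).fun_add (dpd d c b)).fun_sub (dpd c b d)) a,
    pd_sub ((dpd b c d).fun_add (dpd d c b)) (dpd c b d) a,
    pd_add (dpd b c d) (dpd d c b) a]

lemma ΓlΓ_eq_Q (x : Pt n) (a c b d : Fin n) :
    (∑ e, Γl G e a c x * G.Γ e b d x) = Q G a c b d x := by
  unfold Q
  apply Finset.sum_congr rfl; intro e _
  rw [Γ_eq, Finset.mul_sum]
  apply Finset.sum_congr rfl; intro f _; ring

lemma riem4_eq (a b c d : Fin n) (x : Pt n) : G.Riem4 a b c d x = Ecurv G a b c d x := by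
  have split : (∑ e, G.g x c e * (pd a (fun y => G.Γ e b d y) x - pd b (fun y => G.Γ e a d y) x
      + ∑ f, (G.Γ e a f x * G.Γ f b d x - G.Γ e b f x * G.Γ f a d x)))
      = (∑ e, G.g x c e * pd a (fun y => G.Γ e b d y) x)
        - (∑ e, G.g x c e * pd b (fun y => G.Γ e a d y) x)
        + ((∑ e, ∑ f, G.g x c e * G.Γ e a f x * G.Γ f b d x)
          - (∑ e, ∑ f, G.g x c e * G.Γ e b f x * G.Γ f a d x)) := by
    rw [← Finset.sum_sub_distrib, ← Finset.sum_sub_distrib, ← Finset.sum_add_distrib]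
    apply Finset.sum_congr rfl; intro e _
    rw [← Finset.sum_sub_distrib, mul_add, mul_sub, Finset.mul_sum]
    apply congrArg
    exact Finset.sum_congr rfl fun f _ => by ring
  have q1 : (∑ e, ∑ f, G.g x c e * G.Γ e a f x * G.Γ f b d x)
      = ∑ f, Γl G c a f x * G.Γ f b d x := by
    rw [Finset.sum_comm]
    apply Finset.sum_congr rfl; intro f _
    rw [← Finset.sum_mul, gΓ]
  have q2 : (∑ e, ∑ f, G.g x c e * G.Γ e b f x * G.Γ f a d x)
      = ∑ f, Γl G c b f x * G.Γ f a d x := by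
    rw [Finset.sum_comm]
    apply Finset.sum_congr rfl; intro f _
    rw [← Finset.sum_mul, gΓ]
  have key : (∑ e, G.g x c e * (pd a (fun y => G.Γ e b d y) x
      - pd b (fun y => G.Γ e a d y) x
      + ∑ f, (G.Γ e a f x * G.Γ f b d x - G.Γ e b f x * G.Γ f a d x)))
      = Ecurv G a b c d x := ?_
  · exact key
  rw [split, g_pdΓ, g_pdΓ, q1, q2]
  have e1 : (∑ e, (Γl G c a e x + Γl G e a c x) * G.Γ e b d x)
      = (∑ e, Γl G c a e x * G.Γ e b d x) + Q G a c b d x := by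
    rw [← ΓlΓ_eq_Q G x a c b d, ← Finset.sum_add_distrib]
    apply Finset.sum_congr rfl; intro e _; ring
  have e2 : (∑ e, (Γl G c b e x + Γl G e b c x) * G.Γ e a d x)
      = (∑ e, Γl G c b e x * G.Γ e a d x) + Q G b c a d x := by
    rw [← ΓlΓ_eq_Q G x b c a d, ← Finset.sum_add_distrib]
    apply Finset.sum_congr rfl; intro e _; ring
  rw [e1, e2, pd_Γl, pd_Γl, pdpd_comm G x a b c d, pdpd_gsym G x a d c b,
    pdpd_gsym G x b d c a]
  unfold Ecurv
  ring

lemma riem4_swap_ab (a b c d : Fin n) (x : Pt n) :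
    G.Riem4 a b c d x = - G.Riem4 b a c d x := by
  rw [riem4_eq, riem4_eq]; unfold Ecurv; ring

lemma riem4_swap_cd (a b c d : Fin n) (x : Pt n) :
    G.Riem4 a b c d x = - G.Riem4 a b d c x := by
  rw [riem4_eq, riem4_eq]; unfold Ecurv
  rw [Q_pair G a d b c, Q_pair G b d a c]
  ring

lemma riem4_pair (a b c d : Fin n) (x : Pt n) :
    G.Riem4 a b c d x = G.Riem4 c d a b x := by
  rw [riem4_eq, riem4_eq]; unfold Ecurv
  rw [Q_left G c a d b, Q_right G a c d b, Q_left G d a c b, Q_right G a d c b,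
    Q_pair G a d b c, pdpd_comm G x c b d a, pdpd_gsym G x b c d a,
    pdpd_comm G x d a c b, pdpd_gsym G x a d c b, pdpd_comm G x c a d b,
    pdpd_gsym G x a c d b, pdpd_comm G x d b c a, pdpd_gsym G x b d c a]
  ring
end Curv


section PP
variable (G : MetricG n) (K : Pt n → Pt n)

lemma pdK (hpar : ∀ x a b, G.covVec K a b x = 0) :
    ∀ (x : Pt n) (b c : Fin n), pd b (fun y => K y c) x = -∑ d, G.Γ c b d x * K x d := by
  intro x b c
  have h := hpar x b c
  unfold MetricG.covVec at h
  linarith [h]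

lemma riemK (hKs : SmoothVF K) (hpar : ∀ x a b, G.covVec K a b x = 0)
    (a b c : Fin n) (x : Pt n) : (∑ d, G.Riem a b c d x * K x d) = 0 := by
  have dK : ∀ (y : Pt n) p, DifferentiableAt ℝ (fun z => K z p) y := fun y p =>
    ((hKs p).differentiable (by simp)).differentiableAt
  have dΓ : ∀ (y : Pt n) e p q, DifferentiableAt ℝ (fun z => G.Γ e p q z) y := fun y e p q =>
    ((Γ_smooth G e p q).differentiable (by simp)).differentiableAt
  have hpd : ∀ (y : Pt n) (p q : Fin n),
      pd p (fun z => K z q) y = -∑ d, G.Γ q p d y * K y d := pdK G K hpar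
  have h2 : ∀ p r : Fin n, pd p (fun y => pd r (fun z => K z c) y) x
      = -∑ d, (G.Γ c r d x * pd p (fun z => K z d) x
          + K x d * pd p (fun y => G.Γ c r d y) x) := by
    intro p r
    have hfun : (fun y => pd r (fun z => K z c) y) = fun y => -∑ d, G.Γ c r d y * K y d :=
      funext fun y => hpd y r c
    rw [hfun, pd_neg, pd_sum (fun d _ => (dΓ x c r d).fun_mul (dK x d)) p]
    congr 1
    exact Finset.sum_congr rfl fun d _ => pd_mul (dΓ x c r d) (dK x d) p
  have comm := pd_comm (hKs c) a b x
  rw [h2 a b, h2 b a] at comm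
  simp only [hpd x] at comm
  have comm2 := neg_inj.mp comm
  have lhs_eq : ∀ p r : Fin n,
      (∑ d, (G.Γ c r d x * -(∑ e, G.Γ d p e x * K x e)
        + K x d * pd p (fun y => G.Γ c r d y) x))
      = (∑ d, K x d * pd p (fun y => G.Γ c r d y) x)
        - ∑ d, ∑ e, G.Γ c r d x * G.Γ d p e x * K x e := by
    intro p r
    rw [← Finset.sum_sub_distrib]
    apply Finset.sum_congr rfl; intro d _
    have hms : (∑ e, G.Γ c r d x * G.Γ d p e x * K x e)
        = G.Γ c r d x * ∑ e, G.Γ d p e x * K x e := by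
      rw [Finset.mul_sum]
      exact Finset.sum_congr rfl fun e _ => by ring
    rw [hms]; ring
  rw [lhs_eq a b, lhs_eq b a] at comm2
  have swap1 : (∑ d, ∑ e, G.Γ c a e x * G.Γ e b d x * K x d)
      = ∑ d, ∑ e, G.Γ c a d x * G.Γ d b e x * K x e := by rw [Finset.sum_comm]
  have swap2 : (∑ d, ∑ e, G.Γ c b e x * G.Γ e a d x * K x d)
      = ∑ d, ∑ e, G.Γ c b d x * G.Γ d a e x * K x e := by rw [Finset.sum_comm]
  have key : (∑ d, (pd a (fun y => G.Γ c b d y) x - pd b (fun y => G.Γ c a d y) x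
      + ∑ e, (G.Γ c a e x * G.Γ e b d x - G.Γ c b e x * G.Γ e a d x)) * K x d) = 0 := ?_
  · exact key
  have dist : (∑ d, (pd a (fun y => G.Γ c b d y) x - pd b (fun y => G.Γ c a d y) x
      + ∑ e, (G.Γ c a e x * G.Γ e b d x - G.Γ c b e x * G.Γ e a d x)) * K x d)
      = ((∑ d, K x d * pd a (fun y => G.Γ c b d y) x)
          - (∑ d, K x d * pd b (fun y => G.Γ c a d y) x))
        + ((∑ d, ∑ e, G.Γ c a e x * G.Γ e b d x * K x d)
          - (∑ d, ∑ e, G.Γ c b e x * G.Γ e a d x * K x d)) := by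
    rw [← Finset.sum_sub_distrib, ← Finset.sum_sub_distrib, ← Finset.sum_add_distrib]
    apply Finset.sum_congr rfl; intro d _
    rw [← Finset.sum_sub_distrib, add_mul, sub_mul, Finset.sum_mul]
    simp only [sub_mul]
    ring
  rw [dist, swap1, swap2]
  linarith [comm2]

lemma riem4K_d (a b c : Fin n) (x : Pt n)
    (hKs : SmoothVF K) (hpar : ∀ x a b, G.covVec K a b x = 0) :
    (∑ d, G.Riem4 a b c d x * K x d) = 0 := by
  have key : (∑ d, (∑ e, G.g x c e * G.Riem a b e d x) * K x d) = 0 := by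
    calc (∑ d, (∑ e, G.g x c e * G.Riem a b e d x) * K x d)
        = ∑ d, ∑ e, G.g x c e * G.Riem a b e d x * K x d :=
          Finset.sum_congr rfl fun d _ => Finset.sum_mul _ _ _
      _ = ∑ e, ∑ d, G.g x c e * G.Riem a b e d x * K x d := Finset.sum_comm
      _ = ∑ e, G.g x c e * ∑ d, G.Riem a b e d x * K x d := by
          apply Finset.sum_congr rfl; intro e _
          rw [Finset.mul_sum]
          exact Finset.sum_congr rfl fun d _ => by ring
      _ = 0 := by
          apply Finset.sum_eq_zero; intro e _
          rw [riemK G K hKs hpar a b e x, mul_zero]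
  exact key

lemma riem4K_c (hKs : SmoothVF K) (hpar : ∀ x a b, G.covVec K a b x = 0) (a b d : Fin n) (x : Pt n) :
    (∑ c, G.Riem4 a b c d x * K x c) = 0 := by
  have h : (∑ c, G.Riem4 a b c d x * K x c) = -∑ c, G.Riem4 a b d c x * K x c := by
    rw [← Finset.sum_neg_distrib]
    exact Finset.sum_congr rfl fun c _ => by rw [riem4_swap_cd G a b c d]; ring
  rw [h, riem4K_d G K a b d x hKs hpar, neg_zero]

lemma riem4K_a (hKs : SmoothVF K) (hpar : ∀ x a b, G.covVec K a b x = 0) (b c d : Fin n) (x : Pt n) :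
    (∑ a, G.Riem4 a b c d x * K x a) = 0 := by
  have h : (∑ a, G.Riem4 a b c d x * K x a) = ∑ a, G.Riem4 c d a b x * K x a :=
    Finset.sum_congr rfl fun a _ => by rw [riem4_pair G a b c d]
  rw [h, riem4K_c G K hKs hpar c d b x]

lemma riem4K_b (hKs : SmoothVF K) (hpar : ∀ x a b, G.covVec K a b x = 0) (a c d : Fin n) (x : Pt n) :
    (∑ b, G.Riem4 a b c d x * K x b) = 0 := by
  have h : (∑ b, G.Riem4 a b c d x * K x b) = -∑ b, G.Riem4 b a c d x * K x b := by
    rw [← Finset.sum_neg_distrib]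
    exact Finset.sum_congr rfl fun b _ => by rw [riem4_swap_ab G a b c d]; ring
  rw [h, riem4K_a G K hKs hpar a c d x, neg_zero]

end PP


section Rad
variable (G : MetricG n) (K : Pt n → Pt n)

/-- The covector `g(K,·)`. -/
def ω (x : Pt n) (c : Fin n) : ℝ := ∑ e, G.g x c e * K x e

lemma ip_eq_ω (x : Pt n) (X : Pt n) :
    G.ip x (K x) X = ∑ b, ω G K x b * X b := by
  unfold MetricG.ip ω
  rw [Finset.sum_comm]
  apply Finset.sum_congr rfl; intro b _
  rw [Finset.sum_mul]
  apply Finset.sum_congr rfl; intro a _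
  rw [G.symm x b a]

lemma ω_ginv (x : Pt n) (f : Fin n) :
    (∑ b, ω G K x b * G.ginv x b f) = K x f := by
  unfold ω
  calc (∑ b, (∑ e, G.g x b e * K x e) * G.ginv x b f)
      = ∑ b, ∑ e, G.g x b e * K x e * G.ginv x b f :=
        Finset.sum_congr rfl fun b _ => Finset.sum_mul _ _ _
    _ = ∑ e, ∑ b, G.g x b e * K x e * G.ginv x b f := Finset.sum_comm
    _ = ∑ e, K x e * ∑ b, G.g x e b * G.ginv x b f := by
        apply Finset.sum_congr rfl; intro e _
        rw [Finset.mul_sum]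
        apply Finset.sum_congr rfl; intro b _
        rw [G.symm x e b]; ring
    _ = ∑ e, K x e * (if e = f then (1:ℝ) else 0) := by
        apply Finset.sum_congr rfl; intro e _
        rw [mul_inv]
    _ = K x f := by simp

lemma exists_j (x : Pt n) (hK0 : K x ≠ 0) : ∃ j, ω G K x j ≠ 0 := by
  by_contra h
  push_neg at h
  apply hK0
  funext f
  have h2 := ω_ginv G K x f
  rw [Finset.sum_eq_zero fun b _ => by rw [h b, zero_mul]] at h2
  simpa using h2.symm

lemma exists_L (x : Pt n) (hK0 : K x ≠ 0) :
    ∃ L : Pt n, (∑ c, ω G K x c * L c) = 1 := by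
  obtain ⟨j, hj⟩ := exists_j G K x hK0
  refine ⟨fun c => if c = j then (ω G K x j)⁻¹ else 0, ?_⟩
  rw [Finset.sum_eq_single j]
  · simp [mul_inv_cancel₀ hj]
  · intro b _ hb; simp [hb]
  · intro h; exact absurd (Finset.mem_univ j) h

lemma ginv_contract (x : Pt n) (hK0 : K x ≠ 0) (B : Fin n → Fin n → ℝ)
    (h1 : ∀ U : Pt n, (∑ c, ω G K x c * U c) = 0 → ∀ f, (∑ c, B c f * U c) = 0)
    (h2 : ∀ c, (∑ f, B c f * K x f) = 0) :
    (∑ c, ∑ f, G.ginv x c f * B c f) = 0 := by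
  obtain ⟨L, hL⟩ := exists_L G K x hK0
  have hU : ∀ f, (∑ c, ω G K x c * (G.ginv x c f - K x f * L c)) = 0 := by
    intro f
    have hsplit : (∑ c, ω G K x c * (G.ginv x c f - K x f * L c))
        = (∑ c, ω G K x c * G.ginv x c f) - K x f * ∑ c, ω G K x c * L c := by
      rw [Finset.mul_sum, ← Finset.sum_sub_distrib]
      apply Finset.sum_congr rfl; intro c _; ring
    rw [hsplit, ω_ginv, hL]; ring
  have key : ∀ f, (∑ c, B c f * G.ginv x c f) = K x f * ∑ c, B c f * L c := by
    intro f
    have h := h1 (fun c => G.ginv x c f - K x f * L c) (hU f) f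
    have hsplit : (∑ c, B c f * (G.ginv x c f - K x f * L c))
        = (∑ c, B c f * G.ginv x c f) - K x f * ∑ c, B c f * L c := by
      rw [Finset.mul_sum, ← Finset.sum_sub_distrib]
      apply Finset.sum_congr rfl; intro c _; ring
    rw [hsplit] at h; linarith
  calc (∑ c, ∑ f, G.ginv x c f * B c f)
      = ∑ f, ∑ c, B c f * G.ginv x c f := by
        rw [Finset.sum_comm]
        exact Finset.sum_congr rfl fun f _ => Finset.sum_congr rfl fun c _ => by ring
    _ = ∑ f, K x f * ∑ c, B c f * L c := Finset.sum_congr rfl fun f _ => key f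
    _ = ∑ f, ∑ c, K x f * (B c f * L c) :=
        Finset.sum_congr rfl fun f _ => Finset.mul_sum _ _ _
    _ = ∑ c, ∑ f, K x f * (B c f * L c) := Finset.sum_comm
    _ = ∑ c, L c * ∑ f, B c f * K x f := by
        apply Finset.sum_congr rfl; intro c _
        rw [Finset.mul_sum]
        exact Finset.sum_congr rfl fun f _ => by ring
    _ = 0 := by
        apply Finset.sum_eq_zero; intro c _
        rw [h2 c, mul_zero]

lemma riem_as_riem4 (a b c d : Fin n) (x : Pt n) :
    G.Riem a b c d x = ∑ f, G.ginv x c f * G.Riem4 a b f d x := by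
  unfold MetricG.Riem4
  symm
  calc (∑ f, G.ginv x c f * ∑ e, G.g x f e * G.Riem a b e d x)
      = ∑ f, ∑ e, G.ginv x c f * G.g x f e * G.Riem a b e d x := by
        apply Finset.sum_congr rfl; intro f _
        rw [Finset.mul_sum]
        exact Finset.sum_congr rfl fun e _ => by ring
    _ = ∑ e, ∑ f, G.ginv x c f * G.g x f e * G.Riem a b e d x := Finset.sum_comm
    _ = ∑ e, (∑ f, G.ginv x c f * G.g x f e) * G.Riem a b e d x := by
        apply Finset.sum_congr rfl; intro e _
        rw [Finset.sum_mul]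
    _ = ∑ e, (if c = e then (1:ℝ) else 0) * G.Riem a b e d x := by
        apply Finset.sum_congr rfl; intro e _
        rw [G.inv_mul]
    _ = G.Riem a b c d x := by simp

lemma ricci_eq (a b : Fin n) (x : Pt n) :
    G.Ricci a b x = ∑ c, ∑ f, G.ginv x c f * G.Riem4 c a f b x := by
  unfold MetricG.Ricci
  exact Finset.sum_congr rfl fun c _ => riem_as_riem4 G c a c b x

lemma ricci_symm (a b : Fin n) (x : Pt n) : G.Ricci a b x = G.Ricci b a x := by
  calc G.Ricci a b x
      = ∑ c, ∑ f, G.ginv x c f * G.Riem4 c a f b x := ricci_eq G a b x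
    _ = ∑ f, ∑ c, G.ginv x c f * G.Riem4 c a f b x := Finset.sum_comm
    _ = ∑ f, ∑ c, G.ginv x f c * G.Riem4 f b c a x := by
        apply Finset.sum_congr rfl; intro f _
        apply Finset.sum_congr rfl; intro c _
        rw [ginv_symm G x c f, riem4_pair G c a f b]
    _ = G.Ricci b a x := (ricci_eq G b a x).symm

lemma pure_rad_ω (hKs : SmoothVF K) (hK0 : ∀ x, K x ≠ 0)
    (hpar : ∀ x a b, G.covVec K a b x = 0)
    (hdeg : ∀ x (X Y : Pt n), G.ip x (K x) X = 0 → G.ip x (K x) Y = 0 → ∀ c d,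
      (∑ a, ∑ b, G.Riem4 a b c d x * X a * Y b) = 0)
    (x : Pt n) (X : Pt n) (hX : (∑ c, ω G K x c * X c) = 0) (b : Fin n) :
    (∑ a, G.Ricci a b x * X a) = 0 := by
  have hB : (∑ a, G.Ricci a b x * X a)
      = ∑ c, ∑ f, G.ginv x c f * (∑ a, G.Riem4 c a f b x * X a) := by
    calc (∑ a, G.Ricci a b x * X a)
        = ∑ a, (∑ c, ∑ f, G.ginv x c f * G.Riem4 c a f b x) * X a :=
          Finset.sum_congr rfl fun a _ => by rw [ricci_eq]
      _ = ∑ a, ∑ c, (∑ f, G.ginv x c f * G.Riem4 c a f b x) * X a := by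
          apply Finset.sum_congr rfl; intro a _; rw [Finset.sum_mul]
      _ = ∑ c, ∑ a, (∑ f, G.ginv x c f * G.Riem4 c a f b x) * X a := Finset.sum_comm
      _ = ∑ c, ∑ a, ∑ f, G.ginv x c f * G.Riem4 c a f b x * X a := by
          apply Finset.sum_congr rfl; intro c _
          apply Finset.sum_congr rfl; intro a _
          rw [Finset.sum_mul]
      _ = ∑ c, ∑ f, ∑ a, G.ginv x c f * G.Riem4 c a f b x * X a :=
          Finset.sum_congr rfl fun c _ => Finset.sum_comm
      _ = ∑ c, ∑ f, G.ginv x c f * (∑ a, G.Riem4 c a f b x * X a) := by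
          apply Finset.sum_congr rfl; intro c _
          apply Finset.sum_congr rfl; intro f _
          rw [Finset.mul_sum]
          exact Finset.sum_congr rfl fun a _ => by ring
  rw [hB]
  apply ginv_contract G K x (hK0 x)
  · intro U hU f
    have hipU : G.ip x (K x) U = 0 := by rw [ip_eq_ω]; exact hU
    have hipX : G.ip x (K x) X = 0 := by rw [ip_eq_ω]; exact hX
    have h := hdeg x U X hipU hipX f b
    calc (∑ c, (∑ a, G.Riem4 c a f b x * X a) * U c)
        = ∑ c, ∑ a, G.Riem4 c a f b x * U c * X a := by
          apply Finset.sum_congr rfl; intro c _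
          rw [Finset.sum_mul]
          exact Finset.sum_congr rfl fun a _ => by ring
      _ = 0 := h
  · intro c
    calc (∑ f, (∑ a, G.Riem4 c a f b x * X a) * K x f)
        = ∑ f, ∑ a, G.Riem4 c a f b x * X a * K x f := by
          apply Finset.sum_congr rfl; intro f _; rw [Finset.sum_mul]
      _ = ∑ a, ∑ f, G.Riem4 c a f b x * X a * K x f := Finset.sum_comm
      _ = ∑ a, X a * ∑ f, G.Riem4 c a f b x * K x f := by
          apply Finset.sum_congr rfl; intro a _
          rw [Finset.mul_sum]
          exact Finset.sum_congr rfl fun f _ => by ring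
      _ = 0 := by
          apply Finset.sum_eq_zero; intro a _
          rw [riem4K_c G K hKs hpar c a b x, mul_zero]

lemma ricK2 (hKs : SmoothVF K) (hpar : ∀ x a b, G.covVec K a b x = 0)
    (x : Pt n) (a : Fin n) : (∑ b, G.Ricci a b x * K x b) = 0 := by
  calc (∑ b, G.Ricci a b x * K x b)
      = ∑ b, (∑ c, ∑ f, G.ginv x c f * G.Riem4 c a f b x) * K x b :=
        Finset.sum_congr rfl fun b _ => by rw [ricci_eq]
    _ = ∑ b, ∑ c, (∑ f, G.ginv x c f * G.Riem4 c a f b x) * K x b := by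
        apply Finset.sum_congr rfl; intro b _; rw [Finset.sum_mul]
    _ = ∑ c, ∑ b, (∑ f, G.ginv x c f * G.Riem4 c a f b x) * K x b := Finset.sum_comm
    _ = ∑ c, ∑ b, ∑ f, G.ginv x c f * G.Riem4 c a f b x * K x b := by
        apply Finset.sum_congr rfl; intro c _
        apply Finset.sum_congr rfl; intro b _
        rw [Finset.sum_mul]
    _ = ∑ c, ∑ f, ∑ b, G.ginv x c f * G.Riem4 c a f b x * K x b :=
        Finset.sum_congr rfl fun c _ => Finset.sum_comm
    _ = ∑ c, ∑ f, G.ginv x c f * ∑ b, G.Riem4 c a f b x * K x b := by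
        apply Finset.sum_congr rfl; intro c _
        apply Finset.sum_congr rfl; intro f _
        rw [Finset.mul_sum]
        exact Finset.sum_congr rfl fun b _ => by ring
    _ = 0 := by
        apply Finset.sum_eq_zero; intro c _
        apply Finset.sum_eq_zero; intro f _
        rw [riem4K_d G K c a f x hKs hpar, mul_zero]

lemma scal_zero (hKs : SmoothVF K) (hK0 : ∀ x, K x ≠ 0)
    (hpar : ∀ x a b, G.covVec K a b x = 0)
    (hdeg : ∀ x (X Y : Pt n), G.ip x (K x) X = 0 → G.ip x (K x) Y = 0 → ∀ c d,
      (∑ a, ∑ b, G.Riem4 a b c d x * X a * Y b) = 0)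
    (x : Pt n) : G.Scal x = 0 := by
  have key : (∑ a, ∑ b, G.ginv x a b * G.Ricci a b x) = 0 := by
    apply ginv_contract G K x (hK0 x)
    · intro U hU f
      exact pure_rad_ω G K hKs hK0 hpar hdeg x U hU f
    · intro c
      exact ricK2 G K hKs hpar x c
  exact key

lemma perp_ann (x : Pt n) (hK0 : K x ≠ 0) (μ : Fin n → ℝ)
    (h : ∀ U : Pt n, (∑ c, ω G K x c * U c) = 0 → (∑ b, μ b * U b) = 0) :
    ∃ t : ℝ, ∀ b, μ b = t * ω G K x b := by
  obtain ⟨L, hL⟩ := exists_L G K x hK0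
  refine ⟨∑ b, μ b * L b, ?_⟩
  intro b
  set U : Pt n := fun c => (if c = b then (1:ℝ) else 0) - ω G K x b * L c with hUdef
  have hsum1 : (∑ c, ω G K x c * (if c = b then (1:ℝ) else 0)) = ω G K x b := by simp
  have hU : (∑ c, ω G K x c * U c) = 0 := by
    have hsplit : (∑ c, ω G K x c * U c)
        = (∑ c, ω G K x c * (if c = b then (1:ℝ) else 0))
          - ω G K x b * ∑ c, ω G K x c * L c := by
      rw [Finset.mul_sum, ← Finset.sum_sub_distrib]
      apply Finset.sum_congr rfl; intro c _; rw [hUdef]; ring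
    rw [hsplit, hsum1, hL]; ring
  have h2 := h U hU
  have hsplit2 : (∑ c, μ c * U c)
      = (∑ c, μ c * (if c = b then (1:ℝ) else 0)) - ω G K x b * ∑ c, μ c * L c := by
    rw [Finset.mul_sum, ← Finset.sum_sub_distrib]
    apply Finset.sum_congr rfl; intro c _; rw [hUdef]; ring
  rw [hsplit2] at h2
  have hb : (∑ c, μ c * (if c = b then (1:ℝ) else 0)) = μ b := by simp
  rw [hb] at h2
  linarith

lemma ric_structure (hKs : SmoothVF K) (hK0 : ∀ x, K x ≠ 0)
    (hpar : ∀ x a b, G.covVec K a b x = 0)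
    (hdeg : ∀ x (X Y : Pt n), G.ip x (K x) X = 0 → G.ip x (K x) Y = 0 → ∀ c d,
      (∑ a, ∑ b, G.Riem4 a b c d x * X a * Y b) = 0)
    (x : Pt n) :
    ∃ s : ℝ, ∀ a b, G.Ricci a b x = s * ω G K x a * ω G K x b := by
  have hperp1 : ∀ b, ∃ t, ∀ a, G.Ricci a b x = t * ω G K x a := by
    intro b
    apply perp_ann G K x (hK0 x)
    intro U hU
    exact pure_rad_ω G K hKs hK0 hpar hdeg x U hU b
  choose t ht using hperp1
  obtain ⟨j, hj⟩ := exists_j G K x (hK0 x)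
  have htb : ∀ b, t b = G.Ricci j b x * (ω G K x j)⁻¹ := by
    intro b
    rw [ht b j, mul_assoc, mul_inv_cancel₀ hj, mul_one]
  have hperp2 : ∃ s, ∀ b, t b = s * ω G K x b := by
    apply perp_ann G K x (hK0 x)
    intro U hU
    calc (∑ b, t b * U b)
        = (ω G K x j)⁻¹ * ∑ b, G.Ricci b j x * U b := by
          rw [Finset.mul_sum]
          apply Finset.sum_congr rfl; intro b _
          rw [htb b, ricci_symm G j b]; ring
      _ = 0 := by rw [pure_rad_ω G K hKs hK0 hpar hdeg x U hU j, mul_zero]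
  obtain ⟨s, hs⟩ := hperp2
  exact ⟨s, fun a b => by rw [ht b a, hs b]; ring⟩

lemma schouten_structure (hKs : SmoothVF K) (hK0 : ∀ x, K x ≠ 0)
    (hpar : ∀ x a b, G.covVec K a b x = 0)
    (hdeg : ∀ x (X Y : Pt n), G.ip x (K x) X = 0 → G.ip x (K x) Y = 0 → ∀ c d,
      (∑ a, ∑ b, G.Riem4 a b c d x * X a * Y b) = 0)
    (x : Pt n) :
    ∃ s : ℝ, ∀ a b, G.Schouten a b x = s * ω G K x a * ω G K x b := by
  obtain ⟨s, hs⟩ := ric_structure G K hKs hK0 hpar hdeg x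
  refine ⟨(1/((n:ℝ)-2)) * s, fun a b => ?_⟩
  unfold MetricG.Schouten
  rw [scal_zero G K hKs hK0 hpar hdeg x, hs a b]
  ring

end Rad


section Fin6
variable (G : MetricG n) (K : Pt n → Pt n)

lemma ω_smooth (hKs : SmoothVF K) (b : Fin n) : ContDiff ℝ (⊤ : ℕ∞) fun x => ω G K x b := by
  unfold ω
  exact ContDiff.sum fun e _ => (G.smooth b e).mul (hKs e)

lemma riem_smooth (a b c d : Fin n) : ContDiff ℝ (⊤ : ℕ∞) fun x => G.Riem a b c d x := by
  unfold MetricG.Riem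
  exact ((pd_smooth (Γ_smooth G c b d) a).sub (pd_smooth (Γ_smooth G c a d) b)).add
    (ContDiff.sum fun e _ => ((Γ_smooth G c a e).mul (Γ_smooth G e b d)).sub
      ((Γ_smooth G c b e).mul (Γ_smooth G e a d)))

lemma ricci_smooth (a b : Fin n) : ContDiff ℝ (⊤ : ℕ∞) fun x => G.Ricci a b x := by
  unfold MetricG.Ricci
  exact ContDiff.sum fun c _ => riem_smooth G c a c b

lemma scal_smooth : ContDiff ℝ (⊤ : ℕ∞) fun x => G.Scal x := by
  unfold MetricG.Scal
  exact ContDiff.sum fun a _ => ContDiff.sum fun b _ =>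
    (ginv_smooth G a b).mul (ricci_smooth G a b)

lemma schouten_smooth (a b : Fin n) : ContDiff ℝ (⊤ : ℕ∞) fun x => G.Schouten a b x := by
  unfold MetricG.Schouten
  exact contDiff_const.mul ((ricci_smooth G a b).sub
    (((scal_smooth G).div_const _).mul (G.smooth a b)))

lemma covω (hKs : SmoothVF K) (hpar : ∀ x a b, G.covVec K a b x = 0)
    (x : Pt n) (a b : Fin n) :
    pd a (fun y => ω G K y b) x = ∑ e, G.Γ e a b x * ω G K x e := by
  have dg : ∀ p q, DifferentiableAt ℝ (fun y => G.g y p q) x := fun p q =>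
    ((G.smooth p q).differentiable (by simp)).differentiableAt
  have dK : ∀ p, DifferentiableAt ℝ (fun z => K z p) x := fun p =>
    ((hKs p).differentiable (by simp)).differentiableAt
  have hterm : ∀ e : Fin n, pd a (fun y => G.g y b e * K y e) x
      = G.g x b e * pd a (fun z => K z e) x + K x e * (Γl G b a e x + Γl G e a b x) := by
    intro e; rw [pd_mul (dg b e) (dK e), pdg G x a b e]
  have hA : (∑ e, G.g x b e * pd a (fun z => K z e) x)
      = -(∑ f, Γl G b a f x * K x f) := by
    calc (∑ e, G.g x b e * pd a (fun z => K z e) x)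
        = ∑ e, G.g x b e * -(∑ f, G.Γ e a f x * K x f) :=
          Finset.sum_congr rfl fun e _ => by rw [pdK G K hpar x a e]
      _ = -∑ e, ∑ f, G.g x b e * (G.Γ e a f x * K x f) := by
          rw [← Finset.sum_neg_distrib]
          apply Finset.sum_congr rfl; intro e _
          rw [mul_neg, Finset.mul_sum]
      _ = -∑ f, ∑ e, G.g x b e * (G.Γ e a f x * K x f) := by rw [Finset.sum_comm]
      _ = -(∑ f, Γl G b a f x * K x f) := by
          congr 1
          apply Finset.sum_congr rfl; intro f _
          have h : (∑ e, G.g x b e * (G.Γ e a f x * K x f))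
              = (∑ e, G.g x b e * G.Γ e a f x) * K x f := by
            rw [Finset.sum_mul]
            exact Finset.sum_congr rfl fun e _ => by ring
          rw [h, gΓ]
  have hRHS : (∑ e, G.Γ e a b x * ω G K x e) = ∑ e, K x e * Γl G e a b x := by
    calc (∑ e, G.Γ e a b x * ω G K x e)
        = ∑ e, ∑ f, G.Γ e a b x * (G.g x e f * K x f) := by
          apply Finset.sum_congr rfl; intro e _
          rw [show ω G K x e = ∑ f, G.g x e f * K x f from rfl, Finset.mul_sum]
      _ = ∑ f, ∑ e, G.Γ e a b x * (G.g x e f * K x f) := Finset.sum_comm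
      _ = ∑ f, K x f * Γl G f a b x := by
          apply Finset.sum_congr rfl; intro f _
          have h : (∑ e, G.Γ e a b x * (G.g x e f * K x f))
              = (∑ e, G.g x f e * G.Γ e a b x) * K x f := by
            rw [Finset.sum_mul]
            apply Finset.sum_congr rfl; intro e _
            rw [G.symm x f e]; ring
          rw [h, gΓ]; ring
  calc pd a (fun y => ω G K y b) x
      = ∑ e, pd a (fun y => G.g y b e * K y e) x :=
        pd_sum (fun e _ => (dg b e).mul (dK e)) a
    _ = ∑ e, (G.g x b e * pd a (fun z => K z e) x
        + K x e * (Γl G b a e x + Γl G e a b x)) :=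
        Finset.sum_congr rfl fun e _ => hterm e
    _ = (∑ e, G.g x b e * pd a (fun z => K z e) x)
        + ((∑ e, K x e * Γl G b a e x) + (∑ e, K x e * Γl G e a b x)) := by
        rw [← Finset.sum_add_distrib, ← Finset.sum_add_distrib]
        exact Finset.sum_congr rfl fun e _ => by ring
    _ = -(∑ f, Γl G b a f x * K x f)
        + ((∑ e, K x e * Γl G b a e x) + (∑ e, K x e * Γl G e a b x)) := by rw [hA]
    _ = ∑ e, K x e * Γl G e a b x := by
        have h : (∑ f, Γl G b a f x * K x f) = ∑ e, K x e * Γl G b a e x :=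
          Finset.sum_congr rfl fun e _ => by ring
        rw [h]; ring
    _ = ∑ e, G.Γ e a b x * ω G K x e := hRHS.symm

lemma double_factor (C : ℝ) (f g : Fin n → ℝ) (X Y : Pt n) :
    (∑ a, ∑ b, C * (f a * X a) * (g b * Y b))
      = C * (∑ a, f a * X a) * (∑ b, g b * Y b) := by
  calc (∑ a, ∑ b, C * (f a * X a) * (g b * Y b))
      = ∑ a, (C * (f a * X a)) * ∑ b, g b * Y b :=
        Finset.sum_congr rfl fun a _ => (Finset.mul_sum _ _ _).symm
    _ = (∑ a, C * (f a * X a)) * (∑ b, g b * Y b) := (Finset.sum_mul _ _ _).symm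
    _ = C * (∑ a, f a * X a) * (∑ b, g b * Y b) := by
        rw [← Finset.mul_sum]

lemma weylK (hKs : SmoothVF K) (hK0 : ∀ x, K x ≠ 0)
    (hpar : ∀ x a b, G.covVec K a b x = 0)
    (hdeg : ∀ x (X Y : Pt n), G.ip x (K x) X = 0 → G.ip x (K x) Y = 0 → ∀ c d,
      (∑ a, ∑ b, G.Riem4 a b c d x * X a * Y b) = 0)
    (hnull : G.IsNull K)
    (x : Pt n) (b c d : Fin n) : (∑ a, G.Weyl a b c d x * K x a) = 0 := by
  obtain ⟨s, hs⟩ := schouten_structure G K hKs hK0 hpar hdeg x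
  have hωK : (∑ a, ω G K x a * K x a) = 0 := by rw [← ip_eq_ω]; exact hnull x
  have hgc : (∑ a, G.g x c a * K x a) = ω G K x c := rfl
  have hgd : (∑ a, G.g x d a * K x a) = ω G K x d := rfl
  calc (∑ a, G.Weyl a b c d x * K x a)
      = ∑ a, (G.Riem4 a b c d x * K x a
          - s * ω G K x b * ω G K x d * (G.g x c a * K x a)
          + s * G.g x c b * ω G K x d * (ω G K x a * K x a)
          - s * G.g x d b * ω G K x c * (ω G K x a * K x a)
          + s * ω G K x b * ω G K x c * (G.g x d a * K x a)) := by
        apply Finset.sum_congr rfl; intro a _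
        unfold MetricG.Weyl
        rw [hs b d, hs a d, hs a c, hs b c]
        ring
    _ = (∑ a, G.Riem4 a b c d x * K x a)
        - s * ω G K x b * ω G K x d * (∑ a, G.g x c a * K x a)
        + s * G.g x c b * ω G K x d * (∑ a, ω G K x a * K x a)
        - s * G.g x d b * ω G K x c * (∑ a, ω G K x a * K x a)
        + s * ω G K x b * ω G K x c * (∑ a, G.g x d a * K x a) := by
        simp only [Finset.sum_add_distrib, Finset.sum_sub_distrib, ← Finset.mul_sum]
    _ = 0 := by
        rw [riem4K_a G K hKs hpar b c d x, hωK, hgc, hgd]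
        ring

lemma weylXY (hKs : SmoothVF K) (hK0 : ∀ x, K x ≠ 0)
    (hpar : ∀ x a b, G.covVec K a b x = 0)
    (hdeg : ∀ x (X Y : Pt n), G.ip x (K x) X = 0 → G.ip x (K x) Y = 0 → ∀ c d,
      (∑ a, ∑ b, G.Riem4 a b c d x * X a * Y b) = 0)
    (x : Pt n) (X Y : Pt n)
    (hX : (∑ c, ω G K x c * X c) = 0) (hY : (∑ c, ω G K x c * Y c) = 0)
    (c d : Fin n) : (∑ a, ∑ b, G.Weyl a b c d x * X a * Y b) = 0 := by
  obtain ⟨s, hs⟩ := schouten_structure G K hKs hK0 hpar hdeg x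
  have hipX : G.ip x (K x) X = 0 := by rw [ip_eq_ω]; exact hX
  have hipY : G.ip x (K x) Y = 0 := by rw [ip_eq_ω]; exact hY
  have h0 := hdeg x X Y hipX hipY c d
  calc (∑ a, ∑ b, G.Weyl a b c d x * X a * Y b)
      = (∑ a, ∑ b, G.Riem4 a b c d x * X a * Y b)
        - (∑ a, ∑ b, (s * ω G K x d) * (G.g x c a * X a) * (ω G K x b * Y b))
        + (∑ a, ∑ b, (s * ω G K x d) * (ω G K x a * X a) * (G.g x c b * Y b))
        - (∑ a, ∑ b, (s * ω G K x c) * (ω G K x a * X a) * (G.g x d b * Y b))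
        + (∑ a, ∑ b, (s * ω G K x c) * (G.g x d a * X a) * (ω G K x b * Y b)) := by
        simp only [← Finset.sum_add_distrib, ← Finset.sum_sub_distrib]
        apply Finset.sum_congr rfl; intro a _
        apply Finset.sum_congr rfl; intro b _
        unfold MetricG.Weyl
        rw [hs b d, hs a d, hs a c, hs b c]
        ring
    _ = 0 := by
        rw [double_factor, double_factor, double_factor, double_factor, h0, hX, hY]
        ring

lemma cottonXY (hKs : SmoothVF K) (hK0 : ∀ x, K x ≠ 0)
    (hpar : ∀ x a b, G.covVec K a b x = 0)
    (hdeg : ∀ x (X Y : Pt n), G.ip x (K x) X = 0 → G.ip x (K x) Y = 0 → ∀ c d,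
      (∑ a, ∑ b, G.Riem4 a b c d x * X a * Y b) = 0)
    (x : Pt n) (X Y : Pt n)
    (hX : (∑ c, ω G K x c * X c) = 0) (hY : (∑ c, ω G K x c * Y c) = 0)
    (c : Fin n) : (∑ a, ∑ b, G.Cotton c a b x * X a * Y b) = 0 := by
  obtain ⟨j, hj⟩ := exists_j G K x (hK0 x)
  set ψ : Pt n → ℝ := fun y => G.Schouten j j y / (ω G K y j)^2 with hψ
  have hev : ∀ᶠ y in nhds x, ω G K y j ≠ 0 :=
    ((ω_smooth G K hKs j).continuous.continuousAt).eventually_ne hj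
  have hPψ : ∀ y, ω G K y j ≠ 0 → ∀ p q,
      G.Schouten p q y = ψ y * ω G K y p * ω G K y q := by
    intro y hy p q
    obtain ⟨s, hs⟩ := schouten_structure G K hKs hK0 hpar hdeg y
    have hsval : ψ y = s := by
      rw [hψ]
      simp only
      rw [hs j j]
      field_simp
    rw [hs p q, hsval]
  have hx0 : ∀ p q, G.Schouten p q x = ψ x * ω G K x p * ω G K x q := hPψ x hj
  have hdiffψ : DifferentiableAt ℝ ψ x := by
    rw [hψ]
    have h1 : DifferentiableAt ℝ (fun y => G.Schouten j j y) x :=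
      ((schouten_smooth G j j).differentiable (by simp)).differentiableAt
    have h2 : DifferentiableAt ℝ (fun y => (ω G K y j)^2) x :=
      (((ω_smooth G K hKs j).differentiable (by simp)).differentiableAt).pow 2
    simp only [div_eq_mul_inv]
    exact h1.mul (h2.inv (pow_ne_zero 2 hj))
  have dω : ∀ p, DifferentiableAt ℝ (fun y => ω G K y p) x := fun p =>
    ((ω_smooth G K hKs p).differentiable (by simp)).differentiableAt
  have hcov : ∀ a p q, G.cov2 (fun y i j' => G.Schouten i j' y) a p q x
      = pd a ψ x * ω G K x p * ω G K x q := by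
    intro a p q
    unfold MetricG.cov2
    have hev2 : (fun y => G.Schouten p q y) =ᶠ[nhds x]
        fun y => ψ y * ω G K y p * ω G K y q :=
      hev.mono fun y hy => hPψ y hy p q
    have hpd : pd a (fun y => G.Schouten p q y) x
        = pd a ψ x * (ω G K x p * ω G K x q)
          + ψ x * (pd a (fun y => ω G K y p) x * ω G K x q
            + ω G K x p * pd a (fun y => ω G K y q) x) := by
      rw [pd_congr hev2 a, pd_mul (hdiffψ.fun_mul (dω p)) (dω q) a,
        pd_mul hdiffψ (dω p) a]
      ring
    have hg1 : (∑ e, G.Γ e a p x * G.Schouten e q x)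
        = ψ x * ω G K x q * pd a (fun y => ω G K y p) x := by
      rw [covω G K hKs hpar x a p, Finset.mul_sum]
      apply Finset.sum_congr rfl; intro e _
      rw [hx0 e q]; ring
    have hg2 : (∑ e, G.Γ e a q x * G.Schouten p e x)
        = ψ x * ω G K x p * pd a (fun y => ω G K y q) x := by
      rw [covω G K hKs hpar x a q, Finset.mul_sum]
      apply Finset.sum_congr rfl; intro e _
      rw [hx0 p e]; ring
    rw [hpd, hg1, hg2]
    ring
  calc (∑ a, ∑ b, G.Cotton c a b x * X a * Y b)
      = ∑ a, ∑ b, ((pd a ψ x * X a) * (ω G K x b * Y b) * ω G K x c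
          - (ω G K x a * X a) * (pd b ψ x * Y b) * ω G K x c) := by
        apply Finset.sum_congr rfl; intro a _
        apply Finset.sum_congr rfl; intro b _
        unfold MetricG.Cotton
        rw [hcov a b c, hcov b a c]
        ring
    _ = (∑ a, ∑ b, (ω G K x c) * (pd a ψ x * X a) * (ω G K x b * Y b))
        - (∑ a, ∑ b, (ω G K x c) * (ω G K x a * X a) * (pd b ψ x * Y b)) := by
        simp only [← Finset.sum_sub_distrib]
        apply Finset.sum_congr rfl; intro a _
        apply Finset.sum_congr rfl; intro b _
        ring
    _ = 0 := by
        rw [double_factor, double_factor, hX, hY]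
        ring

end Fin6

end PPW

/-- A pseudo-Riemannian pp-wave (parallel null vector K with R(X,Y,·,·)=0
for all X,Y ⊥ K) is a pure radiation metric aligned with K, and its Weyl and Cotton
tensors satisfy C_{abcd}K^a = 0, C_{abcd}X^aY^b = 0 and A_{cab}X^aY^b = 0
for all X, Y orthogonal to K. -/
theorem stmt_12 {n : ℕ} (hn : 4 ≤ n) (G : MetricG n) (K : Pt n → Pt n)
    (hKs : SmoothVF K) (hK0 : ∀ x, K x ≠ 0) (hnull : G.IsNull K)
    (hpar : ∀ x a b, G.covVec K a b x = 0)
    (hdeg : ∀ x (X Y : Pt n), G.ip x (K x) X = 0 → G.ip x (K x) Y = 0 → ∀ c d,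
      (∑ a, ∑ b, G.Riem4 a b c d x * X a * Y b) = 0) :
    G.PureRadiation K ∧
      (∀ x b c d, (∑ a, G.Weyl a b c d x * K x a) = 0) ∧
      (∀ x (X Y : Pt n), G.ip x (K x) X = 0 → G.ip x (K x) Y = 0 → ∀ c d,
        (∑ a, ∑ b, G.Weyl a b c d x * X a * Y b) = 0) ∧
      (∀ x (X Y : Pt n), G.ip x (K x) X = 0 → G.ip x (K x) Y = 0 → ∀ c,
        (∑ a, ∑ b, G.Cotton c a b x * X a * Y b) = 0) := by
  have hX' : ∀ (x : Pt n) (X : Pt n), G.ip x (K x) X = 0 →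
      (∑ c, PPW.ω G K x c * X c) = 0 := fun x X h => by
    rw [← PPW.ip_eq_ω]; exact h
  refine ⟨?_, ?_, ?_, ?_⟩
  · intro x X hX b
    exact PPW.pure_rad_ω G K hKs hK0 hpar hdeg x X (hX' x X hX) b
  · intro x b c d
    exact PPW.weylK G K hKs hK0 hpar hdeg hnull x b c d
  · intro x X Y hXp hYp c d
    exact PPW.weylXY G K hKs hK0 hpar hdeg x X Y (hX' x X hXp) (hX' x Y hYp) c d
  · intro x X Y hXp hYp c
    exact PPW.cottonXY G K hKs hK0 hpar hdeg x X Y (hX' x X hXp) (hX' x Y hYp) c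
end
end

section
/- (Pure radiation + curvature degeneracy ⇒ parallel vector) A pure radiation metric with parallel rays K that additionally satisfies R_{abcd}X^aY^b = 0 for all X,Y ⊥ K admits (locally) a parallel null vector field in the direction of K, hence is a pp-wave. -/
/- A coordinate-chart framework for pseudo-Riemannian geometry on ℝⁿ:
metric, Christoffel symbols, covariant derivatives, curvature, Ricci,
Schouten, Weyl, Cotton and Bach tensors, and the standard tractor
connection, all written in index notation. -/

noncomputable section

open scoped BigOperators

namespace PdCalc
variable {n : ℕ}

lemma pd_add (a : Fin n) {u v : Pt n → ℝ} {x : Pt n} (hu : DifferentiableAt ℝ u x)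
    (hv : DifferentiableAt ℝ v x) :
    pd a (fun y => u y + v y) x = pd a u x + pd a v x := by
  simp [pd, fderiv_fun_add hu hv]

lemma pd_sub (a : Fin n) {u v : Pt n → ℝ} {x : Pt n} (hu : DifferentiableAt ℝ u x)
    (hv : DifferentiableAt ℝ v x) :
    pd a (fun y => u y - v y) x = pd a u x - pd a v x := by
  simp [pd, fderiv_fun_sub hu hv]

lemma pd_mul (a : Fin n) {u v : Pt n → ℝ} {x : Pt n} (hu : DifferentiableAt ℝ u x)
    (hv : DifferentiableAt ℝ v x) :
    pd a (fun y => u y * v y) x = pd a u x * v x + u x * pd a v x := by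
  simp [pd, fderiv_fun_mul hu hv]; ring

lemma pd_sum (a : Fin n) {ι : Type*} (s : Finset ι) {u : ι → Pt n → ℝ} {x : Pt n}
    (hu : ∀ i ∈ s, DifferentiableAt ℝ (u i) x) :
    pd a (fun y => ∑ i ∈ s, u i y) x = ∑ i ∈ s, pd a (u i) x := by
  simp [pd, fderiv_fun_sum hu]

lemma pd_congr {u v : Pt n → ℝ} (h : ∀ y, u y = v y) (a : Fin n) (x : Pt n) :
    pd a u x = pd a v x := by
  have : u = v := funext h
  rw [this]

/-- smoothness of a partial derivative -/
lemma contDiff_pd {u : Pt n → ℝ} (hu : ContDiff ℝ (⊤ : ℕ∞) u) (a : Fin n) :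
    ContDiff ℝ (⊤ : ℕ∞) (fun x => pd a u x) := by
  exact (hu.fderiv_right (by simp)).clm_apply contDiff_const

/-- Clairaut / symmetry of second partial derivatives. -/
lemma pd_comm {u : Pt n → ℝ} (hu : ContDiff ℝ (⊤ : ℕ∞) u) (a b : Fin n) (x : Pt n) :
    pd a (fun y => pd b u y) x = pd b (fun y => pd a u y) x := by
  have hsymm : IsSymmSndFDerivAt ℝ u x := (hu.contDiffAt).isSymmSndFDerivAt (by rw [minSmoothness_of_isRCLikeNormedField]; exact WithTop.coe_le_coe.mpr le_top)
  have hdf : Differentiable ℝ (fderiv ℝ u) :=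
    (hu.fderiv_right (m := (⊤ : ℕ∞)) (by simp)).differentiable (by simp)
  have key : ∀ v w : Pt n, fderiv ℝ (fun y => fderiv ℝ u y w) x v
      = fderiv ℝ (fderiv ℝ u) x v w := by
    intro v w
    rw [fderiv_clm_apply (hdf x) (differentiableAt_const w)]
    simp
  show pd a (fun y => fderiv ℝ u y (Pi.single b 1)) x = pd b (fun y => fderiv ℝ u y (Pi.single a 1)) x
  rw [pd, pd, key, key]
  exact hsymm _ _

end PdCalc
open PdCalc

namespace MetricG
variable {n : ℕ} (G : MetricG n)

/-- the metric as a matrix -/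
def gm (x : Pt n) : Matrix (Fin n) (Fin n) ℝ := Matrix.of fun a b => G.g x a b

def gim (x : Pt n) : Matrix (Fin n) (Fin n) ℝ := Matrix.of fun a b => G.ginv x a b

lemma gim_mul_gm (x : Pt n) : G.gim x * G.gm x = 1 := by
  ext a c
  simp [Matrix.mul_apply, gm, gim, G.inv_mul x a c, Matrix.one_apply]

lemma gm_mul_gim (x : Pt n) : G.gm x * G.gim x = 1 :=
  mul_eq_one_comm.mp (G.gim_mul_gm x)

/-- `g · ginv = 1` entrywise. -/
lemma mul_inv (x : Pt n) (a c : Fin n) :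
    (∑ b, G.g x a b * G.ginv x b c) = if a = c then (1:ℝ) else 0 := by
  have := congrFun (congrFun (G.gm_mul_gim x) a) c
  simpa [Matrix.mul_apply, gm, gim, Matrix.one_apply] using this

lemma gim_eq_inv (x : Pt n) : G.gim x = (G.gm x)⁻¹ :=
  (Matrix.inv_eq_left_inv (G.gim_mul_gm x)).symm

lemma isUnit_det_gm (x : Pt n) : IsUnit (G.gm x).det :=
  Matrix.isUnit_det_of_left_inverse (G.gim_mul_gm x)

/-- determinant of a smooth matrix field is smooth -/
lemma contDiff_det {m : ℕ} (M : Pt n → Matrix (Fin m) (Fin m) ℝ)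
    (hM : ∀ a b, ContDiff ℝ (⊤ : ℕ∞) (fun x => M x a b)) :
    ContDiff ℝ (⊤ : ℕ∞) (fun x => (M x).det) := by
  have : (fun x => (M x).det) =
      fun x => ∑ σ : Equiv.Perm (Fin m), Equiv.Perm.sign σ • ∏ i, M x (σ i) i := by
    funext x; rw [Matrix.det_apply]
  rw [this]
  apply ContDiff.sum
  intro σ _
  have hprod : ContDiff ℝ (⊤ : ℕ∞) (fun x => ∏ i, M x (σ i) i) := by
    classical
    induction (Finset.univ : Finset (Fin m)) using Finset.induction with
    | empty => simpa using contDiff_const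
    | insert _ _ hni ih =>
      simp only [Finset.prod_insert hni]
      exact (hM _ _).mul ih
  have : (fun x => Equiv.Perm.sign σ • ∏ i, M x (σ i) i)
      = fun x => ((Equiv.Perm.sign σ : ℤ) : ℝ) * ∏ i, M x (σ i) i := by
    funext x; simp [Units.smul_def, zsmul_eq_mul]
  rw [this]
  exact ContDiff.mul contDiff_const hprod

lemma contDiff_ginv (a b : Fin n) : ContDiff ℝ (⊤ : ℕ∞) (fun x => G.ginv x a b) := by
  have hdet : ContDiff ℝ (⊤ : ℕ∞) (fun x => (G.gm x).det) :=
    contDiff_det _ (fun a b => by simpa [gm] using G.smooth a b)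
  have hadj : ContDiff ℝ (⊤ : ℕ∞) (fun x => (G.gm x).adjugate a b) := by
    have : (fun x => (G.gm x).adjugate a b)
        = fun x => ((G.gm x).updateRow b (Pi.single a 1)).det := by
      funext x; rw [Matrix.adjugate_apply]
    rw [this]
    apply contDiff_det
    intro i j
    rcases eq_or_ne i b with rfl | hib
    · simpa [Matrix.updateRow_apply] using contDiff_const
    · simp only [Matrix.updateRow_apply, if_neg hib]
      simpa [gm] using G.smooth i j
  have : (fun x => G.ginv x a b) = fun x => (G.gm x).adjugate a b / (G.gm x).det := by
    funext x
    have h1 : G.gim x = (G.gm x)⁻¹ := G.gim_eq_inv x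
    have h2 : (G.gm x)⁻¹ = Ring.inverse (G.gm x).det • (G.gm x).adjugate := Matrix.inv_def _
    have h3 : Ring.inverse (G.gm x).det = ((G.gm x).det)⁻¹ := Ring.inverse_eq_inv _
    have := congrFun (congrFun (h1.trans h2) a) b
    simp only [gim, Matrix.of_apply] at this
    rw [this, h3, Matrix.smul_apply, smul_eq_mul]
    ring
  rw [this]
  exact hadj.div hdet (fun x => (G.isUnit_det_gm x).ne_zero)

lemma contDiff_Γ (c a b : Fin n) : ContDiff ℝ (⊤ : ℕ∞) (fun x => G.Γ c a b x) := by
  have h : ContDiff ℝ (⊤ : ℕ∞) (fun x => ∑ d, G.ginv x c d *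
      (pd a (fun y => G.g y d b) x + pd b (fun y => G.g y d a) x
        - pd d (fun y => G.g y a b) x)) := by
    apply ContDiff.sum
    intro d _
    exact (G.contDiff_ginv c d).mul
      (((contDiff_pd (G.smooth d b) a).add (contDiff_pd (G.smooth d a) b)).sub
        (contDiff_pd (G.smooth a b) d))
  unfold MetricG.Γ
  exact contDiff_const.mul h

end MetricG
namespace MetricG
variable {n : ℕ} (G : MetricG n)

lemma diffAt_g (x : Pt n) (a b : Fin n) : DifferentiableAt ℝ (fun y => G.g y a b) x :=
  ((G.smooth a b).differentiable (by simp)) x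

lemma diffAt_Γ (x : Pt n) (c a b : Fin n) : DifferentiableAt ℝ (fun y => G.Γ c a b y) x :=
  ((G.contDiff_Γ c a b).differentiable (by simp)) x

/-- lowered Christoffel symbol -/
def Γl (c a b : Fin n) (x : Pt n) : ℝ := ∑ e, G.g x c e * G.Γ e a b x

lemma contDiff_Γl (c a b : Fin n) : ContDiff ℝ (⊤ : ℕ∞) (fun x => G.Γl c a b x) :=
  ContDiff.sum fun e _ => (G.smooth c e).mul (G.contDiff_Γ e a b)

lemma diffAt_Γl (x : Pt n) (c a b : Fin n) : DifferentiableAt ℝ (fun y => G.Γl c a b y) x :=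
  ((G.contDiff_Γl c a b).differentiable (by simp)) x

lemma gfun_symm (a b : Fin n) : (fun y => G.g y a b) = (fun y => G.g y b a) :=
  funext fun y => G.symm y a b

lemma Γ_symm (x : Pt n) (c a b : Fin n) : G.Γ c a b x = G.Γ c b a x := by
  unfold MetricG.Γ
  congr 1
  refine Finset.sum_congr rfl fun d _ => ?_
  rw [G.gfun_symm a b]
  ring

lemma Γl_eq (x : Pt n) (c a b : Fin n) :
    G.Γl c a b x = (1/2) * (pd a (fun y => G.g y c b) x + pd b (fun y => G.g y c a) x
      - pd c (fun y => G.g y a b) x) := by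
  have hT : ∀ e, G.Γ e a b x = (1/2) * ∑ d, G.ginv x e d *
      (pd a (fun y => G.g y d b) x + pd b (fun y => G.g y d a) x
        - pd d (fun y => G.g y a b) x) := fun e => rfl
  unfold Γl
  calc ∑ e, G.g x c e * G.Γ e a b x
      = ∑ e, ∑ d, (G.g x c e * G.ginv x e d) * ((1/2) * (pd a (fun y => G.g y d b) x
          + pd b (fun y => G.g y d a) x - pd d (fun y => G.g y a b) x)) := by
        refine Finset.sum_congr rfl fun e _ => ?_
        rw [hT e, Finset.mul_sum]
        · rw [Finset.mul_sum]
          refine Finset.sum_congr rfl fun d _ => by ring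
    _ = ∑ d, ∑ e, (G.g x c e * G.ginv x e d) * ((1/2) * (pd a (fun y => G.g y d b) x
          + pd b (fun y => G.g y d a) x - pd d (fun y => G.g y a b) x)) := Finset.sum_comm
    _ = ∑ d, (if c = d then (1:ℝ) else 0) * ((1/2) * (pd a (fun y => G.g y d b) x
          + pd b (fun y => G.g y d a) x - pd d (fun y => G.g y a b) x)) := by
        refine Finset.sum_congr rfl fun d _ => ?_
        rw [← Finset.sum_mul, G.mul_inv]
    _ = (1/2) * (pd a (fun y => G.g y c b) x + pd b (fun y => G.g y c a) x
          - pd c (fun y => G.g y a b) x) := by simp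

lemma pd_g_eq (x : Pt n) (a b c : Fin n) :
    pd a (fun y => G.g y b c) x = G.Γl b a c x + G.Γl c a b x := by
  rw [Γl_eq, Γl_eq, G.gfun_symm c b, G.gfun_symm c a, G.gfun_symm b a]
  ring

lemma Γl_swap (x : Pt n) (a b c d : Fin n) :
    ∑ e, G.Γl e a b x * G.Γ e c d x = ∑ e, G.Γl e c d x * G.Γ e a b x := by
  unfold Γl
  calc ∑ e, (∑ f, G.g x e f * G.Γ f a b x) * G.Γ e c d x
      = ∑ e, ∑ f, G.g x e f * G.Γ f a b x * G.Γ e c d x := by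
        exact Finset.sum_congr rfl fun e _ => Finset.sum_mul _ _ _
    _ = ∑ f, ∑ e, G.g x e f * G.Γ f a b x * G.Γ e c d x := Finset.sum_comm
    _ = ∑ f, (∑ e, G.g x f e * G.Γ e c d x) * G.Γ f a b x := by
        refine Finset.sum_congr rfl fun f _ => ?_
        rw [Finset.sum_mul]
        refine Finset.sum_congr rfl fun e _ => ?_
        rw [G.symm x e f]; ring

lemma sum_g_pdΓ (x : Pt n) (c a' b' d' : Fin n) :
    ∑ e, G.g x c e * pd a' (fun y => G.Γ e b' d' y) x
      = pd a' (fun y => G.Γl c b' d' y) x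
        - ∑ e, pd a' (fun y => G.g y c e) x * G.Γ e b' d' x := by
  have h1 : pd a' (fun y => G.Γl c b' d' y) x
      = ∑ e, (pd a' (fun y => G.g y c e) x * G.Γ e b' d' x
          + G.g x c e * pd a' (fun y => G.Γ e b' d' y) x) := by
    have h0 : (fun y => G.Γl c b' d' y) = (fun y => ∑ e, G.g y c e * G.Γ e b' d' y) := rfl
    rw [h0, PdCalc.pd_sum a' Finset.univ
      (fun e _ => (G.diffAt_g x c e).fun_mul (G.diffAt_Γ x e b' d'))]
    exact Finset.sum_congr rfl fun e _ =>
      PdCalc.pd_mul a' (G.diffAt_g x c e) (G.diffAt_Γ x e b' d')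
  rw [h1, Finset.sum_add_distrib]
  ring

lemma riem4_expand (x : Pt n) (a b c d : Fin n) : G.Riem4 a b c d x =
    pd a (fun y => G.Γl c b d y) x - ∑ e, pd a (fun y => G.g y c e) x * G.Γ e b d x
    - (pd b (fun y => G.Γl c a d y) x - ∑ e, pd b (fun y => G.g y c e) x * G.Γ e a d x)
    + (∑ e, G.Γl c a e x * G.Γ e b d x - ∑ e, G.Γl c b e x * G.Γ e a d x) := by
  unfold MetricG.Riem4 MetricG.Riem
  calc ∑ e, G.g x c e * (pd a (fun y => G.Γ e b d y) x - pd b (fun y => G.Γ e a d y) x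
        + ∑ f, (G.Γ e a f x * G.Γ f b d x - G.Γ e b f x * G.Γ f a d x))
      = ∑ e, (G.g x c e * pd a (fun y => G.Γ e b d y) x
          - G.g x c e * pd b (fun y => G.Γ e a d y) x
          + (∑ f, G.g x c e * G.Γ e a f x * G.Γ f b d x
            - ∑ f, G.g x c e * G.Γ e b f x * G.Γ f a d x)) := by
        refine Finset.sum_congr rfl fun e _ => ?_
        rw [mul_add, mul_sub, Finset.mul_sum]
        congr 1
        rw [← Finset.sum_sub_distrib]
        exact Finset.sum_congr rfl fun f _ => by ring
    _ = (∑ e, G.g x c e * pd a (fun y => G.Γ e b d y) x)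
        - (∑ e, G.g x c e * pd b (fun y => G.Γ e a d y) x)
        + ((∑ e, ∑ f, G.g x c e * G.Γ e a f x * G.Γ f b d x)
          - ∑ e, ∑ f, G.g x c e * G.Γ e b f x * G.Γ f a d x) := by
        rw [Finset.sum_add_distrib, Finset.sum_sub_distrib, Finset.sum_sub_distrib]
    _ = _ := by
        rw [G.sum_g_pdΓ x c a b d, G.sum_g_pdΓ x c b a d]
        have hA : (∑ e, ∑ f, G.g x c e * G.Γ e a f x * G.Γ f b d x)
            = ∑ e, G.Γl c a e x * G.Γ e b d x := by
          rw [Finset.sum_comm]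
          refine Finset.sum_congr rfl fun f _ => ?_
          have : G.Γl c a f x * G.Γ f b d x = ∑ e, G.g x c e * G.Γ e a f x * G.Γ f b d x := by
            rw [show G.Γl c a f x = ∑ e, G.g x c e * G.Γ e a f x from rfl, Finset.sum_mul]
          exact this.symm
        have hB : (∑ e, ∑ f, G.g x c e * G.Γ e b f x * G.Γ f a d x)
            = ∑ e, G.Γl c b e x * G.Γ e a d x := by
          rw [Finset.sum_comm]
          refine Finset.sum_congr rfl fun f _ => ?_
          have : G.Γl c b f x * G.Γ f a d x = ∑ e, G.g x c e * G.Γ e b f x * G.Γ f a d x := by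
            rw [show G.Γl c b f x = ∑ e, G.g x c e * G.Γ e b f x from rfl, Finset.sum_mul]
          exact this.symm
        rw [hA, hB]

/-- Antisymmetry of the (4,0) curvature tensor in its last two slots. -/
lemma riem4_antisymm (x : Pt n) (a b c d : Fin n) :
    G.Riem4 a b c d x + G.Riem4 a b d c x = 0 := by
  have E1 := G.riem4_expand x a b c d
  have E2 := G.riem4_expand x a b d c
  -- second-derivative terms
  have F1 : pd a (fun y => G.Γl c b d y) x + pd a (fun y => G.Γl d b c y) x
      = pd a (fun y => pd b (fun z => G.g z c d) y) x := by
    rw [← PdCalc.pd_add a (G.diffAt_Γl x c b d) (G.diffAt_Γl x d b c)]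
    exact PdCalc.pd_congr (fun y => (G.pd_g_eq y b c d).symm) a x
  have F2 : pd b (fun y => G.Γl c a d y) x + pd b (fun y => G.Γl d a c y) x
      = pd b (fun y => pd a (fun z => G.g z c d) y) x := by
    rw [← PdCalc.pd_add b (G.diffAt_Γl x c a d) (G.diffAt_Γl x d a c)]
    exact PdCalc.pd_congr (fun y => (G.pd_g_eq y a c d).symm) b x
  have F3 : pd a (fun y => pd b (fun z => G.g z c d) y) x
      = pd b (fun y => pd a (fun z => G.g z c d) y) x :=
    PdCalc.pd_comm (G.smooth c d) a b x
  -- first-derivative terms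
  have G1 : ∑ e, pd a (fun y => G.g y c e) x * G.Γ e b d x
      = ∑ e, G.Γl c a e x * G.Γ e b d x + ∑ e, G.Γl e a c x * G.Γ e b d x := by
    rw [← Finset.sum_add_distrib]
    refine Finset.sum_congr rfl fun e _ => ?_
    rw [G.pd_g_eq x a c e]; ring
  have G2 : ∑ e, pd b (fun y => G.g y c e) x * G.Γ e a d x
      = ∑ e, G.Γl c b e x * G.Γ e a d x + ∑ e, G.Γl e b c x * G.Γ e a d x := by
    rw [← Finset.sum_add_distrib]
    refine Finset.sum_congr rfl fun e _ => ?_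
    rw [G.pd_g_eq x b c e]; ring
  have G3 : ∑ e, pd a (fun y => G.g y d e) x * G.Γ e b c x
      = ∑ e, G.Γl d a e x * G.Γ e b c x + ∑ e, G.Γl e a d x * G.Γ e b c x := by
    rw [← Finset.sum_add_distrib]
    refine Finset.sum_congr rfl fun e _ => ?_
    rw [G.pd_g_eq x a d e]; ring
  have G4 : ∑ e, pd b (fun y => G.g y d e) x * G.Γ e a c x
      = ∑ e, G.Γl d b e x * G.Γ e a c x + ∑ e, G.Γl e b d x * G.Γ e a c x := by
    rw [← Finset.sum_add_distrib]
    refine Finset.sum_congr rfl fun e _ => ?_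
    rw [G.pd_g_eq x b d e]; ring
  have H1 : ∑ e, G.Γl e a c x * G.Γ e b d x = ∑ e, G.Γl e b d x * G.Γ e a c x :=
    G.Γl_swap x a c b d
  have H2 : ∑ e, G.Γl e a d x * G.Γ e b c x = ∑ e, G.Γl e b c x * G.Γ e a d x :=
    G.Γl_swap x a d b c
  linear_combination E1 + E2 + F1 - F2 + F3 - G1 + G2 - G3 + G4 - H1 - H2
end MetricG
namespace MetricG
variable {n : ℕ} (G : MetricG n)

lemma hray_pd {K : Pt n → Pt n} {f : Pt n → Fin n → ℝ} (hray : G.ParallelRays K f)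
    (b c : Fin n) (y : Pt n) :
    pd b (fun z => K z c) y = f y b * K y c - ∑ e, G.Γ c b e y * K y e := by
  have h := hray y b c
  unfold MetricG.covVec at h
  linarith [h]

theorem riem_contract_K {K : Pt n → Pt n} {f : Pt n → Fin n → ℝ}
    (hKs : SmoothVF K) (hfs : SmoothForm f) (hray : G.ParallelRays K f)
    (x : Pt n) (a b c : Fin n) :
    ∑ d, G.Riem a b c d x * K x d
      = (pd a (fun y => f y b) x - pd b (fun y => f y a) x) * K x c := by
  have hKa := G.hray_pd hray
  have dK : ∀ (e : Fin n) (y : Pt n), DifferentiableAt ℝ (fun z => K z e) y :=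
    fun e y => ((hKs e).differentiable (by simp)) y
  have df : ∀ (e : Fin n) (y : Pt n), DifferentiableAt ℝ (fun z => f z e) y :=
    fun e y => ((hfs e).differentiable (by simp)) y
  have dpdK : ∀ (e e' : Fin n) (y : Pt n),
      DifferentiableAt ℝ (fun z => pd e (fun w => K w e') z) y :=
    fun e e' y => ((PdCalc.contDiff_pd (hKs e') e).differentiable (by simp)) y
  have hpdA : pd a (fun y => K y c) x = f x a * K x c - ∑ e, G.Γ c a e x * K x e := hKa a c x
  have hpdB : pd b (fun y => K y c) x = f x b * K x c - ∑ e, G.Γ c b e x * K x e := hKa b c x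
  have Dgen : ∀ a' b' : Fin n, pd a' (fun y => pd b' (fun z => K z c) y) x
      = pd a' (fun y => f y b') x * K x c + f x b' * pd a' (fun y => K y c) x
        - ∑ e, pd a' (fun y => G.Γ c b' e y) x * K x e
        - ∑ e, G.Γ c b' e x * pd a' (fun y => K y e) x := by
    intro a' b'
    have h0 : pd a' (fun y => pd b' (fun z => K z c) y) x
        = pd a' (fun y => f y b' * K y c - ∑ e, G.Γ c b' e y * K y e) x :=
      PdCalc.pd_congr (fun y => hKa b' c y) a' x
    have dmul : DifferentiableAt ℝ (fun y => f y b' * K y c) x := (df b' x).mul (dK c x)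
    have dsum : DifferentiableAt ℝ (fun y => ∑ e, G.Γ c b' e y * K y e) x := by
      apply DifferentiableAt.fun_sum
      exact fun e _ => (G.diffAt_Γ x c b' e).mul (dK e x)
    have h1 : pd a' (fun y => f y b' * K y c) x
        = pd a' (fun y => f y b') x * K x c + f x b' * pd a' (fun y => K y c) x :=
      PdCalc.pd_mul a' (df b' x) (dK c x)
    have h2 : pd a' (fun y => ∑ e, G.Γ c b' e y * K y e) x
        = ∑ e, (pd a' (fun y => G.Γ c b' e y) x * K x e
            + G.Γ c b' e x * pd a' (fun y => K y e) x) := by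
      rw [PdCalc.pd_sum a' Finset.univ (fun e _ => (G.diffAt_Γ x c b' e).fun_mul (dK e x))]
      exact Finset.sum_congr rfl fun e _ =>
        PdCalc.pd_mul a' (G.diffAt_Γ x c b' e) (dK e x)
    rw [h0, PdCalc.pd_sub a' dmul dsum, h1, h2, Finset.sum_add_distrib]
    ring
  have D1 := Dgen a b
  have D2 := Dgen b a
  have CL : pd a (fun y => pd b (fun z => K z c) y) x
      = pd b (fun y => pd a (fun z => K z c) y) x := PdCalc.pd_comm (hKs c) a b x
  have S1 : ∑ e, G.Γ c b e x * pd a (fun y => K y e) x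
      = f x a * (∑ e, G.Γ c b e x * K x e)
        - ∑ e, ∑ f', G.Γ c b e x * G.Γ e a f' x * K x f' := by
    calc ∑ e, G.Γ c b e x * pd a (fun y => K y e) x
        = ∑ e, (G.Γ c b e x * (f x a * K x e)
            - ∑ f', G.Γ c b e x * G.Γ e a f' x * K x f') := by
          refine Finset.sum_congr rfl fun e _ => ?_
          rw [hKa a e x, mul_sub, Finset.mul_sum]
          congr 1
          exact Finset.sum_congr rfl fun f' _ => by ring
      _ = _ := by
          rw [Finset.sum_sub_distrib, Finset.mul_sum]
          congr 1
          exact Finset.sum_congr rfl fun e _ => by ring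
  have S2 : ∑ e, G.Γ c a e x * pd b (fun y => K y e) x
      = f x b * (∑ e, G.Γ c a e x * K x e)
        - ∑ e, ∑ f', G.Γ c a e x * G.Γ e b f' x * K x f' := by
    calc ∑ e, G.Γ c a e x * pd b (fun y => K y e) x
        = ∑ e, (G.Γ c a e x * (f x b * K x e)
            - ∑ f', G.Γ c a e x * G.Γ e b f' x * K x f') := by
          refine Finset.sum_congr rfl fun e _ => ?_
          rw [hKa b e x, mul_sub, Finset.mul_sum]
          congr 1
          exact Finset.sum_congr rfl fun f' _ => by ring
      _ = _ := by
          rw [Finset.sum_sub_distrib, Finset.mul_sum]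
          congr 1
          exact Finset.sum_congr rfl fun e _ => by ring
  have EL : ∑ d, G.Riem a b c d x * K x d
      = ∑ d, pd a (fun y => G.Γ c b d y) x * K x d
        - ∑ d, pd b (fun y => G.Γ c a d y) x * K x d
        + (∑ e, ∑ f', G.Γ c a e x * G.Γ e b f' x * K x f'
          - ∑ e, ∑ f', G.Γ c b e x * G.Γ e a f' x * K x f') := by
    unfold MetricG.Riem
    calc ∑ d, (pd a (fun y => G.Γ c b d y) x - pd b (fun y => G.Γ c a d y) x
          + ∑ e, (G.Γ c a e x * G.Γ e b d x - G.Γ c b e x * G.Γ e a d x)) * K x d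
        = ∑ d, (pd a (fun y => G.Γ c b d y) x * K x d
            - pd b (fun y => G.Γ c a d y) x * K x d
            + (∑ e, G.Γ c a e x * G.Γ e b d x * K x d
              - ∑ e, G.Γ c b e x * G.Γ e a d x * K x d)) := by
          refine Finset.sum_congr rfl fun d _ => ?_
          rw [add_mul, sub_mul, Finset.sum_mul]
          congr 1
          rw [← Finset.sum_sub_distrib]
          exact Finset.sum_congr rfl fun e _ => by ring
      _ = (∑ d, pd a (fun y => G.Γ c b d y) x * K x d)
          - (∑ d, pd b (fun y => G.Γ c a d y) x * K x d)
          + ((∑ d, ∑ e, G.Γ c a e x * G.Γ e b d x * K x d)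
            - ∑ d, ∑ e, G.Γ c b e x * G.Γ e a d x * K x d) := by
          rw [Finset.sum_add_distrib, Finset.sum_sub_distrib, Finset.sum_sub_distrib]
      _ = _ := by
          rw [Finset.sum_comm (f := fun d e => G.Γ c a e x * G.Γ e b d x * K x d),
            Finset.sum_comm (f := fun d e => G.Γ c b e x * G.Γ e a d x * K x d)]
  linear_combination EL + D1 - D2 - CL + f x b * hpdA - f x a * hpdB - S1 + S2

end MetricG
section Helpers
variable {n : ℕ}

/-- antisymmetrized derivative of the one-form `f`, contracted with two vectors -/
def dfB (f : Pt n → Fin n → ℝ) (x : Pt n) (X Y : Pt n) : ℝ :=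
  ∑ a, ∑ b, (pd a (fun y => f y b) x - pd b (fun y => f y a) x) * X a * Y b

lemma dfB_skew (f : Pt n → Fin n → ℝ) (x : Pt n) (X Y : Pt n) :
    dfB f x X Y = -dfB f x Y X := by
  unfold dfB
  refine (Finset.sum_comm).trans ?_
  rw [← Finset.sum_neg_distrib]
  refine Finset.sum_congr rfl fun b _ => ?_
  rw [← Finset.sum_neg_distrib]
  exact Finset.sum_congr rfl fun a _ => by ring

lemma dfB_self (f : Pt n → Fin n → ℝ) (x : Pt n) (X : Pt n) : dfB f x X X = 0 := by
  have h := dfB_skew f x X X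
  linarith

lemma dfB_single (f : Pt n → Fin n → ℝ) (x : Pt n) (a b : Fin n) :
    dfB f x (Pi.single a 1) (Pi.single b 1)
      = pd a (fun y => f y b) x - pd b (fun y => f y a) x := by
  unfold dfB
  rw [Finset.sum_eq_single a]
  · rw [Finset.sum_eq_single b]
    · simp
    · intro q _ hq; simp [Pi.single_apply, hq]
    · simp
  · intro p _ hp
    simp [Pi.single_apply, hp]
  · simp

lemma dfB_left_decomp (f : Pt n → Fin n → ℝ) (x : Pt n) (X X' Y : Pt n) (t : ℝ) :
    dfB f x (fun p => X p + t * X' p) Y = dfB f x X Y + t * dfB f x X' Y := by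
  unfold dfB
  rw [Finset.mul_sum, ← Finset.sum_add_distrib]
  refine Finset.sum_congr rfl fun a _ => ?_
  rw [Finset.mul_sum, ← Finset.sum_add_distrib]
  exact Finset.sum_congr rfl fun b _ => by ring

lemma dfB_right_decomp (f : Pt n → Fin n → ℝ) (x : Pt n) (X Y Y' : Pt n) (t : ℝ) :
    dfB f x X (fun p => Y p + t * Y' p) = dfB f x X Y + t * dfB f x X Y' := by
  rw [dfB_skew, dfB_left_decomp, dfB_skew f x Y X, dfB_skew f x Y' X]
  ring

end Helpers

namespace MetricG
variable {n : ℕ} (G : MetricG n)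

lemma riem_from_riem4 (x : Pt n) (a b c d : Fin n) :
    G.Riem a b c d x = ∑ e, G.ginv x c e * G.Riem4 a b e d x := by
  symm
  unfold MetricG.Riem4
  calc ∑ e, G.ginv x c e * ∑ f, G.g x e f * G.Riem a b f d x
      = ∑ e, ∑ f, (G.ginv x c e * G.g x e f) * G.Riem a b f d x := by
        refine Finset.sum_congr rfl fun e _ => ?_
        rw [Finset.mul_sum]
        exact Finset.sum_congr rfl fun f _ => by ring
    _ = ∑ f, ∑ e, (G.ginv x c e * G.g x e f) * G.Riem a b f d x := Finset.sum_comm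
    _ = ∑ f, (if c = f then (1:ℝ) else 0) * G.Riem a b f d x := by
        refine Finset.sum_congr rfl fun f _ => ?_
        rw [← Finset.sum_mul, G.inv_mul]
    _ = G.Riem a b c d x := by simp

/-- lowered commutator identity -/
lemma riem4_contract_K {K : Pt n → Pt n} {f : Pt n → Fin n → ℝ}
    (hKs : SmoothVF K) (hfs : SmoothForm f) (hray : G.ParallelRays K f)
    (x : Pt n) (a b c : Fin n) :
    ∑ d, G.Riem4 a b c d x * K x d
      = (pd a (fun y => f y b) x - pd b (fun y => f y a) x)
        * (∑ e, G.g x c e * K x e) := by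
  unfold MetricG.Riem4
  calc ∑ d, (∑ e, G.g x c e * G.Riem a b e d x) * K x d
      = ∑ d, ∑ e, G.g x c e * (G.Riem a b e d x * K x d) := by
        refine Finset.sum_congr rfl fun d _ => ?_
        rw [Finset.sum_mul]
        exact Finset.sum_congr rfl fun e _ => by ring
    _ = ∑ e, ∑ d, G.g x c e * (G.Riem a b e d x * K x d) := Finset.sum_comm
    _ = ∑ e, G.g x c e * ∑ d, G.Riem a b e d x * K x d := by
        refine Finset.sum_congr rfl fun e _ => (Finset.mul_sum _ _ _).symm
    _ = ∑ e, G.g x c e * ((pd a (fun y => f y b) x - pd b (fun y => f y a) x) * K x e) := by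
        refine Finset.sum_congr rfl fun e _ => ?_
        rw [G.riem_contract_K hKs hfs hray x a b e]
    _ = _ := by
        rw [Finset.mul_sum]
        exact Finset.sum_congr rfl fun e _ => by ring

end MetricG
section Sum4
variable {n : ℕ}

lemma sum4_rot (t : Fin n → Fin n → Fin n → Fin n → ℝ) :
    (∑ b', ∑ a', ∑ c, ∑ e, t b' a' c e) = ∑ b', ∑ e, ∑ c, ∑ a', t b' a' c e := by
  refine Finset.sum_congr rfl fun b' _ => ?_
  calc ∑ a', ∑ c, ∑ e, t b' a' c e
      = ∑ a', ∑ e, ∑ c, t b' a' c e := Finset.sum_congr rfl fun a' _ => Finset.sum_comm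
    _ = ∑ e, ∑ a', ∑ c, t b' a' c e := Finset.sum_comm
    _ = ∑ e, ∑ c, ∑ a', t b' a' c e := Finset.sum_congr rfl fun e _ => Finset.sum_comm

end Sum4

namespace MetricG
variable {n : ℕ} (G : MetricG n)

theorem df_zero {K : Pt n → Pt n} {f : Pt n → Fin n → ℝ}
    (hKs : SmoothVF K) (hfs : SmoothForm f) (hK0 : ∀ x, K x ≠ 0) (hnull : G.IsNull K)
    (hray : G.ParallelRays K f) (hpr : G.PureRadiation K)
    (hdeg : ∀ x (X Y : Pt n), G.ip x (K x) X = 0 → G.ip x (K x) Y = 0 → ∀ c d,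
      (∑ a, ∑ b, G.Riem4 a b c d x * X a * Y b) = 0)
    (x : Pt n) (a b : Fin n) :
    pd a (fun y => f y b) x = pd b (fun y => f y a) x := by
  classical
  set Kl : Fin n → ℝ := fun c => ∑ e, G.g x c e * K x e with hKl
  have ipKl : ∀ X : Pt n, G.ip x (K x) X = ∑ c, Kl c * X c := by
    intro X
    refine (Finset.sum_comm).trans (Finset.sum_congr rfl fun c _ => ?_)
    rw [hKl, Finset.sum_mul]
    refine Finset.sum_congr rfl fun e _ => ?_
    rw [G.symm x e c]
  have Kl_ginv : ∀ e, ∑ c, Kl c * G.ginv x c e = K x e := by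
    intro e
    simp only [hKl]
    calc ∑ c, (∑ p, G.g x c p * K x p) * G.ginv x c e
        = ∑ c, ∑ p, (G.g x p c * G.ginv x c e) * K x p := by
          refine Finset.sum_congr rfl fun c _ => ?_
          rw [Finset.sum_mul]
          refine Finset.sum_congr rfl fun p _ => ?_
          rw [G.symm x c p]; ring
      _ = ∑ p, ∑ c, (G.g x p c * G.ginv x c e) * K x p := Finset.sum_comm
      _ = ∑ p, (if p = e then (1:ℝ) else 0) * K x p := by
          refine Finset.sum_congr rfl fun p _ => ?_
          rw [← Finset.sum_mul, G.mul_inv]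
      _ = K x e := by simp
  have KlK : ∑ c, Kl c * K x c = 0 := (ipKl (K x)).symm.trans (hnull x)
  obtain ⟨i, hKi⟩ : ∃ i, K x i ≠ 0 := by
    by_contra h
    push_neg at h
    exact hK0 x (funext fun j => h j)
  set L : Pt n := fun p => G.ginv x p i * (K x i)⁻¹ with hL
  have KlL : ∑ c, Kl c * L c = 1 := by
    simp only [hL]
    calc ∑ c, Kl c * (G.ginv x c i * (K x i)⁻¹)
        = (∑ c, Kl c * G.ginv x c i) * (K x i)⁻¹ := by
          rw [Finset.sum_mul]
          exact Finset.sum_congr rfl fun c _ => by ring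
      _ = 1 := by rw [Kl_ginv i]; field_simp
  have LC : ∀ p q r, ∑ d, G.Riem4 p q r d x * K x d
      = (pd p (fun y => f y q) x - pd q (fun y => f y p) x) * Kl r := by
    intro p q r
    rw [hKl]
    exact G.riem4_contract_K hKs hfs hray x p q r
  clear_value Kl L
  -- (i): dfB vanishes on K-orthogonal pairs
  have Fperp : ∀ X Y : Pt n, G.ip x (K x) X = 0 → G.ip x (K x) Y = 0 →
      dfB f x X Y = 0 := by
    intro X Y hX hY
    obtain ⟨c0, hc0⟩ : ∃ c0, Kl c0 ≠ 0 := by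
      by_contra h
      push_neg at h
      refine hKi ?_
      rw [← Kl_ginv i]
      exact Finset.sum_eq_zero fun c _ => by rw [h c, zero_mul]
    have key : dfB f x X Y * Kl c0 = 0 := by
      calc dfB f x X Y * Kl c0
          = ∑ p, ∑ q, ((pd p (fun y => f y q) x - pd q (fun y => f y p) x) * Kl c0)
              * (X p * Y q) := by
            show (∑ p, ∑ q, (pd p (fun y => f y q) x - pd q (fun y => f y p) x)
              * X p * Y q) * Kl c0 = _
            rw [Finset.sum_mul]
            refine Finset.sum_congr rfl fun p _ => ?_
            rw [Finset.sum_mul]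
            exact Finset.sum_congr rfl fun q _ => by ring
        _ = ∑ p, ∑ q, ∑ d, G.Riem4 p q c0 d x * X p * Y q * K x d := by
            refine Finset.sum_congr rfl fun p _ => Finset.sum_congr rfl fun q _ => ?_
            rw [← LC p q c0]
            rw [Finset.sum_mul]
            exact Finset.sum_congr rfl fun d _ => by ring
        _ = ∑ p, ∑ d, ∑ q, G.Riem4 p q c0 d x * X p * Y q * K x d :=
            Finset.sum_congr rfl fun p _ => Finset.sum_comm
        _ = ∑ d, ∑ p, ∑ q, G.Riem4 p q c0 d x * X p * Y q * K x d := Finset.sum_comm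
        _ = ∑ d, (∑ p, ∑ q, G.Riem4 p q c0 d x * X p * Y q) * K x d := by
            refine Finset.sum_congr rfl fun d _ => ?_
            rw [Finset.sum_mul]
            exact Finset.sum_congr rfl fun p _ => (Finset.sum_mul _ _ _).symm
        _ = 0 := Finset.sum_eq_zero fun d _ => by
            rw [hdeg x X Y hX hY c0 d, zero_mul]
    exact (mul_eq_zero.mp key).resolve_right hc0
  -- (ii): dfB L X vanishes for X orthogonal to K
  have FLX : ∀ X : Pt n, G.ip x (K x) X = 0 → dfB f x L X = 0 := by
    intro X hX
    set P : Fin n → Fin n → ℝ :=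
      fun c e => G.ginv x c e - K x c * L e - L c * K x e with hP
    have hPK : ∀ e, G.ip x (K x) (fun c => P c e) = 0 := by
      intro e
      rw [ipKl]
      calc ∑ c, Kl c * P c e
          = ∑ c, (Kl c * G.ginv x c e - (Kl c * K x c) * L e - (Kl c * L c) * K x e) := by
            refine Finset.sum_congr rfl fun c _ => ?_
            rw [hP]; ring
        _ = (∑ c, Kl c * G.ginv x c e) - (∑ c, Kl c * K x c) * L e
            - (∑ c, Kl c * L c) * K x e := by
            rw [Finset.sum_sub_distrib, Finset.sum_sub_distrib,
              Finset.sum_mul, Finset.sum_mul]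
        _ = 0 := by rw [Kl_ginv e, KlK, KlL]; ring
    have hPdecomp : ∀ c e, G.ginv x c e = P c e + K x c * L e + L c * K x e :=
      fun c e => by simp only [hP]; ring
    clear_value P
    have step01 : (0:ℝ) = ∑ b', ∑ a', ∑ c, ∑ e,
        G.ginv x c e * G.Riem4 c a' e b' x * X a' * L b' := by
      have step0 : ∑ b', (∑ a', G.Ricci a' b' x * X a') * L b' = 0 :=
        Finset.sum_eq_zero fun b' _ => by rw [hpr x X hX b', zero_mul]
      rw [← step0]
      refine Finset.sum_congr rfl fun b' _ => ?_
      rw [Finset.sum_mul]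
      refine Finset.sum_congr rfl fun a' _ => ?_
      show G.Ricci a' b' x * X a' * L b' = _
      calc G.Ricci a' b' x * X a' * L b'
          = ∑ c, G.Riem c a' c b' x * X a' * L b' := by
            show (∑ c, G.Riem c a' c b' x) * X a' * L b' = _
            rw [Finset.sum_mul, Finset.sum_mul]
        _ = ∑ c, ∑ e, G.ginv x c e * G.Riem4 c a' e b' x * X a' * L b' := by
            refine Finset.sum_congr rfl fun c _ => ?_
            rw [G.riem_from_riem4 x c a' c b', Finset.sum_mul, Finset.sum_mul]
    have split : (0:ℝ)
        = (∑ b', ∑ a', ∑ c, ∑ e, P c e * G.Riem4 c a' e b' x * X a' * L b')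
          + (∑ b', ∑ a', ∑ c, ∑ e, (K x c * L e) * G.Riem4 c a' e b' x * X a' * L b')
          + (∑ b', ∑ a', ∑ c, ∑ e, (L c * K x e) * G.Riem4 c a' e b' x * X a' * L b') := by
      rw [step01]
      rw [← Finset.sum_add_distrib, ← Finset.sum_add_distrib]
      refine Finset.sum_congr rfl fun b' _ => ?_
      rw [← Finset.sum_add_distrib, ← Finset.sum_add_distrib]
      refine Finset.sum_congr rfl fun a' _ => ?_
      rw [← Finset.sum_add_distrib, ← Finset.sum_add_distrib]
      refine Finset.sum_congr rfl fun c _ => ?_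
      rw [← Finset.sum_add_distrib, ← Finset.sum_add_distrib]
      refine Finset.sum_congr rfl fun e _ => ?_
      rw [hPdecomp c e]; ring
    have zeroP : (∑ b', ∑ a', ∑ c, ∑ e, P c e * G.Riem4 c a' e b' x * X a' * L b') = 0 := by
      rw [sum4_rot]
      refine Finset.sum_eq_zero fun b' _ => Finset.sum_eq_zero fun e _ => ?_
      have hdP : ∑ p, ∑ q, G.Riem4 p q e b' x * P p e * X q = 0 :=
        hdeg x (fun c => P c e) X (hPK e) hX e b'
      calc ∑ c, ∑ a', P c e * G.Riem4 c a' e b' x * X a' * L b'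
          = (∑ c, ∑ a', G.Riem4 c a' e b' x * P c e * X a') * L b' := by
            rw [Finset.sum_mul]
            refine Finset.sum_congr rfl fun c _ => ?_
            rw [Finset.sum_mul]
            exact Finset.sum_congr rfl fun a' _ => by ring
        _ = 0 := by rw [hdP, zero_mul]
    have zeroKL : (∑ b', ∑ a', ∑ c, ∑ e,
        (K x c * L e) * G.Riem4 c a' e b' x * X a' * L b') = 0 := by
      rw [sum4_rot]
      refine Finset.sum_eq_zero fun b' _ => Finset.sum_eq_zero fun e _ => ?_
      have hdK : ∑ p, ∑ q, G.Riem4 p q e b' x * K x p * X q = 0 :=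
        hdeg x (K x) X (hnull x) hX e b'
      calc ∑ c, ∑ a', (K x c * L e) * G.Riem4 c a' e b' x * X a' * L b'
          = (∑ c, ∑ a', G.Riem4 c a' e b' x * K x c * X a') * (L e * L b') := by
            rw [Finset.sum_mul]
            refine Finset.sum_congr rfl fun c _ => ?_
            rw [Finset.sum_mul]
            exact Finset.sum_congr rfl fun a' _ => by ring
        _ = 0 := by rw [hdK, zero_mul]
    have hKe : ∀ c a' b', ∑ e, G.Riem4 c a' e b' x * K x e
        = -((pd c (fun y => f y a') x - pd a' (fun y => f y c) x) * Kl b') := by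
      intro c a' b'
      have h1 : ∑ e, G.Riem4 c a' e b' x * K x e
          = ∑ e, -(G.Riem4 c a' b' e x * K x e) := by
        refine Finset.sum_congr rfl fun e _ => ?_
        have h2 := G.riem4_antisymm x c a' e b'
        linear_combination K x e * h2
      rw [h1, Finset.sum_neg_distrib, LC c a' b']
    have zeroLK : (∑ b', ∑ a', ∑ c, ∑ e,
        (L c * K x e) * G.Riem4 c a' e b' x * X a' * L b') = - dfB f x L X := by
      rw [sum4_rot]
      calc ∑ b', ∑ e, ∑ c, ∑ a', (L c * K x e) * G.Riem4 c a' e b' x * X a' * L b'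
          = ∑ b', ∑ c, ∑ e, ∑ a', (L c * K x e) * G.Riem4 c a' e b' x * X a' * L b' :=
            Finset.sum_congr rfl fun b' _ => Finset.sum_comm
        _ = ∑ b', ∑ c, ∑ a', ∑ e, (L c * K x e) * G.Riem4 c a' e b' x * X a' * L b' :=
            Finset.sum_congr rfl fun b' _ => Finset.sum_congr rfl fun c _ => Finset.sum_comm
        _ = ∑ b', ∑ c, ∑ a', (∑ e, G.Riem4 c a' e b' x * K x e) * (L c * X a' * L b') := by
            refine Finset.sum_congr rfl fun b' _ => Finset.sum_congr rfl fun c _ =>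
              Finset.sum_congr rfl fun a' _ => ?_
            rw [Finset.sum_mul]
            exact Finset.sum_congr rfl fun e _ => by ring
        _ = ∑ b', ∑ c, ∑ a',
            -(((pd c (fun y => f y a') x - pd a' (fun y => f y c) x) * L c * X a')
              * (Kl b' * L b')) := by
            refine Finset.sum_congr rfl fun b' _ => Finset.sum_congr rfl fun c _ =>
              Finset.sum_congr rfl fun a' _ => ?_
            rw [hKe c a' b']
            ring
        _ = ∑ b', -((∑ c, ∑ a',
            (pd c (fun y => f y a') x - pd a' (fun y => f y c) x) * L c * X a')
              * (Kl b' * L b')) := by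
            refine Finset.sum_congr rfl fun b' _ => ?_
            rw [Finset.sum_mul, ← Finset.sum_neg_distrib]
            exact Finset.sum_congr rfl fun c _ => by
              rw [Finset.sum_mul, ← Finset.sum_neg_distrib]
        _ = - dfB f x L X := by
            rw [Finset.sum_neg_distrib]
            congr 1
            have hS : (∑ c, ∑ a',
                (pd c (fun y => f y a') x - pd a' (fun y => f y c) x) * L c * X a')
                = dfB f x L X := rfl
            rw [hS]
            calc ∑ b', dfB f x L X * (Kl b' * L b')
                = dfB f x L X * ∑ b', Kl b' * L b' := by
                  rw [Finset.mul_sum]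
              _ = dfB f x L X := by rw [KlL, mul_one]
    rw [zeroP, zeroKL, zeroLK] at split
    linarith
  -- (iii): assembling
  have hsingleKl : ∀ p : Fin n, ∑ c, Kl c * (Pi.single p (1:ℝ) : Pt n) c = Kl p := by
    intro p
    rw [Finset.sum_eq_single p]
    · simp
    · intro q _ hq
      simp [Pi.single_apply, hq]
    · simp
  have ort : ∀ p : Fin n,
      G.ip x (K x) (fun c => (Pi.single p (1:ℝ) : Pt n) c - Kl p * L c) = 0 := by
    intro p
    rw [ipKl]
    calc ∑ c, Kl c * ((Pi.single p (1:ℝ) : Pt n) c - Kl p * L c)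
        = (∑ c, Kl c * (Pi.single p (1:ℝ) : Pt n) c) - Kl p * (∑ c, Kl c * L c) := by
          rw [Finset.mul_sum, ← Finset.sum_sub_distrib]
          exact Finset.sum_congr rfl fun c _ => by ring
      _ = 0 := by rw [hsingleKl p, KlL]; ring
  have hdecomp : ∀ p : Fin n,
      (fun c => ((Pi.single p (1:ℝ) : Pt n) c - Kl p * L c) + Kl p * L c) = (Pi.single p (1:ℝ) : Pt n) :=
    fun p => funext fun c => by ring
  have E0 : dfB f x (fun c => ((Pi.single a (1:ℝ) : Pt n) c - Kl a * L c) + Kl a * L c)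
      (fun c => ((Pi.single b (1:ℝ) : Pt n) c - Kl b * L c) + Kl b * L c)
      = dfB f x (Pi.single a (1:ℝ)) (Pi.single b (1:ℝ)) := by
    rw [hdecomp a, hdecomp b]
  have E1 := dfB_left_decomp f x (fun c => (Pi.single a (1:ℝ) : Pt n) c - Kl a * L c) L
    (fun c => ((Pi.single b (1:ℝ) : Pt n) c - Kl b * L c) + Kl b * L c) (Kl a)
  have E2 := dfB_right_decomp f x (fun c => (Pi.single a (1:ℝ) : Pt n) c - Kl a * L c)
    (fun c => (Pi.single b (1:ℝ) : Pt n) c - Kl b * L c) L (Kl b)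
  have E3 := dfB_right_decomp f x L (fun c => (Pi.single b (1:ℝ) : Pt n) c - Kl b * L c) L (Kl b)
  have h1 : dfB f x (fun c => (Pi.single a (1:ℝ) : Pt n) c - Kl a * L c)
      (fun c => (Pi.single b (1:ℝ) : Pt n) c - Kl b * L c) = 0 := Fperp _ _ (ort a) (ort b)
  have h2 : dfB f x L (fun c => (Pi.single b (1:ℝ) : Pt n) c - Kl b * L c) = 0 := FLX _ (ort b)
  have h2' : dfB f x L (fun c => (Pi.single a (1:ℝ) : Pt n) c - Kl a * L c) = 0 := FLX _ (ort a)
  have h3 : dfB f x (fun c => (Pi.single a (1:ℝ) : Pt n) c - Kl a * L c) L = 0 := by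
    rw [dfB_skew, h2', neg_zero]
  have h4 : dfB f x L L = 0 := dfB_self f x L
  have main : dfB f x (Pi.single a (1:ℝ)) (Pi.single b (1:ℝ)) = 0 := by
    rw [← E0, E1, E2, E3, h1, h2, h3, h4]
    ring
  have hfin := dfB_single f x a b
  rw [main] at hfin
  linarith

end MetricG
section Poincare
open MeasureTheory intervalIntegral
variable {n : ℕ} {f : Pt n → Fin n → ℝ}

/-- radial potential of the one-form `f` -/
def pot (f : Pt n → Fin n → ℝ) : Pt n → ℝ :=
  fun x => ∫ t in (0:ℝ)..1, ∑ c, f (t • x) c * x c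

/-- the `x`-derivative of the integrand -/
def potD (f : Pt n → Fin n → ℝ) (x : Pt n) (t : ℝ) : Pt n →L[ℝ] ℝ :=
  ∑ c, (f (t • x) c • (ContinuousLinearMap.proj c : Pt n →L[ℝ] ℝ)
    + x c • (t • fderiv ℝ (fun z => f z c) (t • x)))

lemma potD_cont (hfs : SmoothForm f) :
    Continuous (fun q : Pt n × ℝ => potD f q.1 q.2) := by
  have hst : Continuous (fun q : Pt n × ℝ => q.2 • q.1) := continuous_snd.smul continuous_fst
  apply continuous_finset_sum
  intro c _
  exact ((((hfs c).continuous).comp hst).smul continuous_const).add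
    (((continuous_apply c).comp continuous_fst).smul
      (continuous_snd.smul ((((hfs c).fderiv_right (m := (⊤ : ℕ∞)) (by simp)).continuous).comp hst)))

lemma potD_hasFDerivAt (hfs : SmoothForm f) (x : Pt n) (t : ℝ) :
    HasFDerivAt (fun y => ∑ c, f (t • y) c * y c) (potD f x t) x := by
  apply HasFDerivAt.fun_sum
  intro c _
  have h1 : HasFDerivAt (fun z => f z c) (fderiv ℝ (fun z => f z c) (t • x)) (t • x) :=
    (((hfs c).differentiable (by simp)) (t • x)).hasFDerivAt
  have h2 : HasFDerivAt (fun y : Pt n => t • y)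
      ((t : ℝ) • ContinuousLinearMap.id ℝ (Pt n)) x := (hasFDerivAt_id x).const_smul t
  have h3 := h1.comp x h2
  have h4 : (fderiv ℝ (fun z => f z c) (t • x)).comp
      ((t : ℝ) • ContinuousLinearMap.id ℝ (Pt n)) = t • fderiv ℝ (fun z => f z c) (t • x) := by
    ext v; simp
  rw [h4] at h3
  have hproj : HasFDerivAt (fun y : Pt n => y c)
      (ContinuousLinearMap.proj c : Pt n →L[ℝ] ℝ) x :=
    (ContinuousLinearMap.proj c : Pt n →L[ℝ] ℝ).hasFDerivAt
  exact h3.mul hproj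

lemma pot_hasFDerivAt (hfs : SmoothForm f) (p : Pt n) :
    HasFDerivAt (pot f) (∫ t in (0:ℝ)..1, potD f p t) p := by
  have hFcont : ∀ x : Pt n, Continuous (fun t : ℝ => ∑ c, f (t • x) c * x c) := by
    intro x
    apply continuous_finset_sum
    intro c _
    exact (((hfs c).continuous).comp (continuous_id.smul continuous_const)).mul continuous_const
  obtain ⟨C, hC⟩ := ((isCompact_closedBall p 1).prod isCompact_Icc).exists_bound_of_continuousOn
    ((potD_cont hfs).continuousOn (s := Metric.closedBall p 1 ×ˢ Set.Icc (0:ℝ) 1))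
  unfold pot
  exact intervalIntegral.hasFDerivAt_integral_of_dominated_of_fderiv_le (𝕜 := ℝ)
    (μ := MeasureTheory.volume)
    (F := fun x t => ∑ c, f (t • x) c * x c) (F' := fun x t => potD f x t) (x₀ := p)
    (a := 0) (b := 1) (bound := fun _ => C) (Metric.ball_mem_nhds p one_pos)
    (Filter.Eventually.of_forall fun x => (hFcont x).aestronglyMeasurable)
    ((hFcont p).intervalIntegrable 0 1)
    (((potD_cont hfs).comp (continuous_const.prodMk continuous_id)).aestronglyMeasurable)
    (Filter.Eventually.of_forall fun t ht x hx => hC (x, t)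
      ⟨Metric.ball_subset_closedBall hx,
        Set.Ioc_subset_Icc_self (by rwa [Set.uIoc_of_le zero_le_one] at ht)⟩)
    intervalIntegrable_const
    (Filter.Eventually.of_forall fun t _ x _ => potD_hasFDerivAt hfs x t)

lemma pot_differentiable (hfs : SmoothForm f) : Differentiable ℝ (pot f) :=
  fun p => (pot_hasFDerivAt hfs p).differentiableAt

set_option maxHeartbeats 1000000 in
lemma pd_pot (hfs : SmoothForm f)
    (hcl : ∀ x a b, pd a (fun y => f y b) x = pd b (fun y => f y a) x)
    (p : Pt n) (b : Fin n) : pd b (pot f) p = f p b := by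
  have hF'cont : Continuous fun t : ℝ => potD f p t :=
    (potD_cont hfs).comp (continuous_const.prodMk continuous_id)
  have happly : pd b (pot f) p = ∫ t in (0:ℝ)..1, potD f p t (Pi.single b 1) := by
    show fderiv ℝ (pot f) p (Pi.single b 1) = _
    rw [(pot_hasFDerivAt hfs p).fderiv]
    exact ContinuousLinearMap.intervalIntegral_apply (hF'cont.intervalIntegrable 0 1) _
  have key : ∀ t : ℝ, HasDerivAt (fun s => s * f (s • p) b)
      (potD f p t (Pi.single b 1)) t := by
    intro t
    have h1 : HasDerivAt (fun s : ℝ => s • p) p t := by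
      simpa using (hasDerivAt_id t).smul_const p
    have h2 : HasDerivAt (fun s : ℝ => f (s • p) b)
        (fderiv ℝ (fun z => f z b) (t • p) p) t :=
      ((((hfs b).differentiable (by simp)) (t • p)).hasFDerivAt).comp_hasDerivAt (l := fun z => f z b) t h1
    have h3 : HasDerivAt (fun s : ℝ => s * f (s • p) b)
        (1 * f (t • p) b + t * (fderiv ℝ (fun z => f z b) (t • p) p)) t :=
      (hasDerivAt_id t).mul h2
    have happ : potD f p t (Pi.single b 1)
        = (∑ c, f (t • p) c * (Pi.single b (1:ℝ) : Pt n) c)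
          + ∑ c, p c * (t * pd b (fun z => f z c) (t • p)) := by
      show (∑ c, (f (t • p) c • (ContinuousLinearMap.proj c : Pt n →L[ℝ] ℝ)
          + p c • (t • fderiv ℝ (fun z => f z c) (t • p)))) (Pi.single b 1) = _
      rw [ContinuousLinearMap.sum_apply]
      refine Eq.trans (Finset.sum_congr rfl fun c _ => ?_) (Finset.sum_add_distrib)
      simp [pd, smul_eq_mul]
    have hsing : (∑ c, f (t • p) c * (Pi.single b (1:ℝ) : Pt n) c) = f (t • p) b := by
      rw [Finset.sum_eq_single b]
      · simp
      · intro q _ hq; simp [Pi.single_apply, hq]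
      · simp
    have hp : (p : Pt n) = ∑ c, p c • (Pi.single c (1:ℝ) : Pt n) := by
      ext j
      simp [Pi.single_apply]
    have hDgen : ∀ D : Pt n →L[ℝ] ℝ, D p = ∑ c, p c * D (Pi.single c 1) := by
      intro D
      conv_lhs => rw [hp]
      rw [map_sum]
      exact Finset.sum_congr rfl fun c _ => by rw [_root_.map_smul, smul_eq_mul]
    have hDp : fderiv ℝ (fun z => f z b) (t • p) p
        = ∑ c, p c * pd c (fun z => f z b) (t • p) :=
      hDgen (fderiv ℝ (fun z => f z b) (t • p))
    have hval : potD f p t (Pi.single b 1)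
        = 1 * f (t • p) b + t * (fderiv ℝ (fun z => f z b) (t • p) p) := by
      rw [happ, hsing, hDp, Finset.mul_sum]
      have hco : ∀ c ∈ Finset.univ, p c * (t * pd b (fun z => f z c) (t • p))
          = t * (p c * pd c (fun z => f z b) (t • p)) := fun c _ => by
        rw [hcl (t • p) b c]; ring
      rw [Finset.sum_congr rfl hco]
      ring
    rw [hval]
    exact h3
  have hint : IntervalIntegrable (fun t => potD f p t (Pi.single b 1))
      MeasureTheory.volume 0 1 :=
    (hF'cont.clm_apply continuous_const).intervalIntegrable 0 1
  rw [happly, intervalIntegral.integral_eq_sub_of_hasDerivAt (fun t _ => key t) hint]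
  simp

end Poincare

/-- Pure radiation + curvature degeneracy ⇒ parallel vector: A pure
radiation metric with parallel rays K that additionally satisfies R_{abcd}X^aY^b = 0 for
all X,Y ⊥ K has df = 0, equivalently R_{abc}{}^d K^c = 0, and hence admits locally a
parallel null vector field in the direction of K; so it is a pp-wave. -/
theorem stmt_14 {n : ℕ} (hn : 4 ≤ n) (G : MetricG n) (K : Pt n → Pt n) (f : Pt n → Fin n → ℝ)
    (hKs : SmoothVF K) (hfs : SmoothForm f) (hK0 : ∀ x, K x ≠ 0) (hnull : G.IsNull K)
    (hray : G.ParallelRays K f) (hpr : G.PureRadiation K)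
    (hdeg : ∀ x (X Y : Pt n), G.ip x (K x) X = 0 → G.ip x (K x) Y = 0 → ∀ c d,
      (∑ a, ∑ b, G.Riem4 a b c d x * X a * Y b) = 0) :
    (∀ x a b, G.cov1 f a b x = G.cov1 f b a x) ∧
      (∀ x a b d, (∑ c, G.Riem a b d c x * K x c) = 0) ∧
      ∀ x₀ : Pt n, ∃ ε > (0:ℝ), ∃ φ : Pt n → ℝ, Differentiable ℝ φ ∧
        (∀ x ∈ Metric.ball x₀ ε, φ x ≠ 0) ∧
        ∀ x ∈ Metric.ball x₀ ε, ∀ a b, G.covVec (fun y => φ y • K y) a b x = 0 := by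
  have hdf : ∀ x a b, pd a (fun y => f y b) x = pd b (fun y => f y a) x :=
    fun x a b => G.df_zero hKs hfs hK0 hnull hray hpr hdeg x a b
  refine ⟨?_, ?_, ?_⟩
  · intro x a b
    unfold MetricG.cov1
    rw [hdf x a b]
    congr 1
    refine Finset.sum_congr rfl fun e _ => ?_
    rw [G.Γ_symm x e a b]
  · intro x a b d
    rw [G.riem_contract_K hKs hfs hray x a b d, hdf x a b, sub_self, zero_mul]
  · intro x₀
    refine ⟨1, one_pos, fun y => Real.exp (-pot f y), ?_, ?_, ?_⟩
    · exact ((pot_differentiable hfs).neg).exp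
    · intro x _
      exact Real.exp_ne_zero _
    · intro x _ a b
      have hφdiff : DifferentiableAt ℝ (fun y => Real.exp (-pot f y)) x :=
        (((pot_differentiable hfs).neg).exp) x
      have dK : DifferentiableAt ℝ (fun z => K z b) x := ((hKs b).differentiable (by simp)) x
      have hpdφ : pd a (fun y => Real.exp (-pot f y)) x
          = -(Real.exp (-pot f x) * f x a) := by
        have h1 : HasFDerivAt (fun y => -pot f y) (-(fderiv ℝ (pot f) x)) x :=
          ((pot_differentiable hfs x).hasFDerivAt).neg
        have h2 : HasFDerivAt (fun y => Real.exp (-pot f y))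
            (Real.exp (-pot f x) • (-(fderiv ℝ (pot f) x))) x :=
          (Real.hasDerivAt_exp (-pot f x)).comp_hasFDerivAt (h₂ := Real.exp) x h1
        show fderiv ℝ (fun y => Real.exp (-pot f y)) x (Pi.single a 1) = _
        rw [h2.fderiv]
        have hD : fderiv ℝ (pot f) x (Pi.single a 1) = f x a := pd_pot hfs hdf x a
        simp [hD]
      simp only [MetricG.covVec, Pi.smul_apply, smul_eq_mul]
      rw [PdCalc.pd_mul a hφdiff dK, hpdφ, G.hray_pd hray a b x]
      have hsum : ∑ c, G.Γ b a c x * (Real.exp (-pot f x) * K x c)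
          = Real.exp (-pot f x) * ∑ c, G.Γ b a c x * K x c := by
        rw [Finset.mul_sum]
        exact Finset.sum_congr rfl fun c _ => by ring
      rw [hsum]
      ring
end
end
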